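/- arXiv:2012.06894 — 12 statements merged into one kernel-verified Lean document; each statement's English description precedes it below -/
import Mathlib

section
/- Let Λ be a discrete additive subgroup of ℝ^n containing a nonzero element, and let d(Λ) denote the minimum of ‖x‖² over nonzero x ∈ Λ. For every ε with 0 < ε ≤ 1/4, every r ≥ 0 with r ≤ d(Λ)·(1/2 − ε), and every y ∈ ℝ^n, the set {x ∈ Λ : ‖x − y‖² ≤ r} is finite with at most 1/(2ε) elements. -/
/-!
Distinct points of the list differ by nonzero lattice vectors, so they are pairwise at squared
distance at least `d(Λ)`. For `m` points `x` with `‖x - y‖² ≤ r`, summing `‖x - z‖²` over all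
ordered pairs gives `m (m - 1) d(Λ) ≤ 2 m ∑ ‖x - y‖² - 2 ‖∑ (x - y)‖² ≤ 2 m² r`, that is
`m (d(Λ) - 2 r) ≤ d(Λ)`; and `d(Λ) - 2 r ≥ 2 ε d(Λ)`.
-/

open Finset

section Packing

variable {E : Type*} [NormedAddCommGroup E] [InnerProductSpace ℝ E]

theorem sum_sum_norm_sub_sq_eq {ι : Type*} (s : Finset ι) (u : ι → E) :
    ∑ i ∈ s, ∑ j ∈ s, ‖u i - u j‖ ^ 2 =
      2 * #s * ∑ i ∈ s, ‖u i‖ ^ 2 - 2 * ‖∑ i ∈ s, u i‖ ^ 2 := by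
  simp_rw [norm_sub_sq_real, sum_add_distrib, sum_sub_distrib, ← mul_sum, ← inner_sum,
    ← sum_inner, sum_const, nsmul_eq_mul, real_inner_self_eq_norm_sq, ← mul_sum]
  ring

theorem Finset.card_mul_sub_two_mul_le_of_forall_le_norm_sub_sq (s : Finset E) {y : E}
    {r d : ℝ} (hball : ∀ x ∈ s, ‖x - y‖ ^ 2 ≤ r)
    (hsep : ∀ x ∈ s, ∀ z ∈ s, x ≠ z → d ≤ ‖x - z‖ ^ 2) (hd : 0 ≤ d) :
    #s * (d - 2 * r) ≤ d := by
  classical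
  have hlower : #s * #s * d - #s * d ≤ ∑ x ∈ s, ∑ z ∈ s, ‖x - z‖ ^ 2 := by
    calc #s * #s * d - #s * d = ∑ x ∈ s, ∑ z ∈ s, (d - if x = z then d else 0) := by
          simp only [sum_sub_distrib, sum_const, nsmul_eq_mul, sum_ite_eq, sum_ite_mem, inter_self]
          ring
      _ ≤ ∑ x ∈ s, ∑ z ∈ s, ‖x - z‖ ^ 2 := by
          gcongr with x hx z hz
          split_ifs with hxz
          · simp [hxz]
          · simpa using hsep x hx z hz hxz
  have hupper : ∑ x ∈ s, ∑ z ∈ s, ‖x - z‖ ^ 2 ≤ 2 * #s * (#s * r) := by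
    calc ∑ x ∈ s, ∑ z ∈ s, ‖x - z‖ ^ 2 = ∑ x ∈ s, ∑ z ∈ s, ‖(x - y) - (z - y)‖ ^ 2 := by
          simp_rw [sub_sub_sub_cancel_right]
      _ ≤ 2 * #s * ∑ x ∈ s, ‖x - y‖ ^ 2 := by
          rw [sum_sum_norm_sub_sq_eq s (· - y)]
          exact sub_le_self _ (by positivity)
      _ ≤ 2 * #s * (#s * r) := by
          gcongr
          simpa using sum_le_card_nsmul s _ r hball
  rcases s.eq_empty_or_nonempty with rfl | hs
  · simpa using hd
  · have hpos : (0 : ℝ) < #s := by exact_mod_cast hs.card_pos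
    nlinarith

theorem Set.finite_and_ncard_mul_sub_two_mul_le_of_forall_le_norm_sub_sq (S : Set E) {y : E}
    {r d : ℝ} (hball : ∀ x ∈ S, ‖x - y‖ ^ 2 ≤ r)
    (hsep : ∀ x ∈ S, ∀ z ∈ S, x ≠ z → d ≤ ‖x - z‖ ^ 2) (hd : 0 ≤ d) (hrd : 2 * r < d) :
    S.Finite ∧ S.ncard * (d - 2 * r) ≤ d := by
  have hcard (t : Finset E) (ht : ↑t ⊆ S) : #t * (d - 2 * r) ≤ d :=
    t.card_mul_sub_two_mul_le_of_forall_le_norm_sub_sq (fun x hx ↦ hball x (ht hx))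
      (fun x hx z hz ↦ hsep x (ht hx) z (ht hz)) hd
  have hfin : S.Finite := by
    by_contra hinf
    obtain ⟨t, hts, ht⟩ := Set.Infinite.exists_subset_card_eq hinf (⌊d / (d - 2 * r)⌋₊ + 1)
    have hlt : d / (d - 2 * r) < #t := by
      rw [ht]; push_cast; exact Nat.lt_floor_add_one _
    rw [div_lt_iff₀ (by linarith)] at hlt
    linarith [hcard t hts]
  refine ⟨hfin, ?_⟩
  simpa [← Set.ncard_coe_finset] using hcard hfin.toFinset (by simp)

end Packing

theorem stmt_0_general {n : ℕ} (Λ : AddSubgroup (EuclideanSpace ℝ (Fin n)))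
    (dΛ : ℝ)
    (hdΛ : IsLeast {d : ℝ | ∃ x ∈ Λ, x ≠ (0 : EuclideanSpace ℝ (Fin n)) ∧ ‖x‖ ^ 2 = d} dΛ)
    (ε r : ℝ) (hε : 0 < ε)
    (hr : r ≤ dΛ * (1 / 2 - ε))
    (y : EuclideanSpace ℝ (Fin n)) :
    {x : EuclideanSpace ℝ (Fin n) | x ∈ Λ ∧ ‖x - y‖ ^ 2 ≤ r}.Finite ∧
      (({x : EuclideanSpace ℝ (Fin n) | x ∈ Λ ∧ ‖x - y‖ ^ 2 ≤ r}.ncard : ℝ) ≤ 1 / (2 * ε)) := by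
  set S := {x : EuclideanSpace ℝ (Fin n) | x ∈ Λ ∧ ‖x - y‖ ^ 2 ≤ r}
  obtain ⟨⟨x₀, -, hx₀, hdx₀⟩, hmin⟩ := hdΛ
  have hd : 0 < dΛ := hdx₀ ▸ pow_pos (norm_pos_iff.mpr hx₀) 2
  have hsep : ∀ x ∈ S, ∀ z ∈ S, x ≠ z → dΛ ≤ ‖x - z‖ ^ 2 :=
    fun x hx z hz hxz ↦ hmin ⟨x - z, sub_mem hx.1 hz.1, sub_ne_zero.mpr hxz, rfl⟩
  obtain ⟨hfin, hcard⟩ := Set.finite_and_ncard_mul_sub_two_mul_le_of_forall_le_norm_sub_sq S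
    (fun x hx ↦ hx.2) hsep hd.le (by nlinarith)
  refine ⟨hfin, ?_⟩
  rw [le_div_iff₀ (by positivity)]
  refine le_of_mul_le_mul_right ?_ hd
  calc S.ncard * (2 * ε) * dΛ ≤ S.ncard * (dΛ - 2 * r) := by
        rw [mul_assoc]; gcongr; linarith
    _ ≤ 1 * dΛ := by rwa [one_mul]

/-- Johnson-type bound on list size (first case): if `r ≤ d(Λ)·(1/2 − ε)` with
`0 < ε ≤ 1/4`, then the list `Λ ∩ B_r(y)` is finite with at most `1/(2ε)` elements. -/
theorem stmt_0 {n : ℕ} (Λ : AddSubgroup (EuclideanSpace ℝ (Fin n)))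
    [DiscreteTopology Λ]
    (hΛne : ∃ x ∈ Λ, x ≠ (0 : EuclideanSpace ℝ (Fin n)))
    (dΛ : ℝ)
    (hdΛ : IsLeast {d : ℝ | ∃ x ∈ Λ, x ≠ (0 : EuclideanSpace ℝ (Fin n)) ∧ ‖x‖ ^ 2 = d} dΛ)
    (ε r : ℝ) (hε : 0 < ε) (hε4 : ε ≤ 1 / 4)
    (hr0 : 0 ≤ r) (hr : r ≤ dΛ * (1 / 2 - ε))
    (y : EuclideanSpace ℝ (Fin n)) :
    {x : EuclideanSpace ℝ (Fin n) | x ∈ Λ ∧ ‖x - y‖ ^ 2 ≤ r}.Finite ∧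
      (({x : EuclideanSpace ℝ (Fin n) | x ∈ Λ ∧ ‖x - y‖ ^ 2 ≤ r}.ncard : ℝ) ≤ 1 / (2 * ε)) :=
  stmt_0_general Λ dΛ hdΛ ε r hε hr y
end

section
/- Let Λ be a discrete additive subgroup of ℝ^n containing a nonzero element, and let d(Λ) denote the minimum of ‖x‖² over nonzero x ∈ Λ. For every r ≥ 0 with r ≤ d(Λ)/2 and every y ∈ ℝ^n, the set {x ∈ Λ : ‖x − y‖² ≤ r} is finite with at most 2n elements. -/
/-!
Shift the centre `y` to the origin. Two distinct list points `x₁, x₂` satisfy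
`‖x₁ - x₂‖² ≥ d(Λ) ≥ 2r ≥ ‖x₁ - y‖² + ‖x₂ - y‖²`, so the shifted points form an obtuse family:
pairwise inner products are `≤ 0`. If `y` itself is on the list it is the only point. Otherwise the
shifted points are nonzero, and a family of nonzero pairwise obtuse vectors in a real inner
product space of dimension `n` has at most `2n` members.
-/

open Module RealInnerProductSpace Finset

lemma Set.finite_and_ncard_le_of_forall_finset_card_le {α : Type*} {s : Set α} {N : ℕ}
    (h : ∀ t : Finset α, ↑t ⊆ s → #t ≤ N) : s.Finite ∧ s.ncard ≤ N := by
  have hfin : s.Finite := Set.not_infinite.mp fun hinf => by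
    obtain ⟨t, hts, ht⟩ := hinf.exists_subset_card_eq (N + 1)
    have := h t hts
    omega
  refine ⟨hfin, ?_⟩
  rw [Set.ncard_eq_toFinset_card _ hfin]
  exact h hfin.toFinset (by simp)

section ObtuseFamily

variable {E : Type*} [NormedAddCommGroup E] [InnerProductSpace ℝ E]

lemma coe_orthogonalProjectionOnto_orthogonal_singleton (v w : E) :
    ((ℝ ∙ v)ᗮ.orthogonalProjectionOnto w : E) = w - (⟪v, w⟫ / ‖v‖ ^ 2) • v := by
  rw [← Submodule.starProjection_apply, Submodule.starProjection_orthogonal_val,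
    Submodule.starProjection_singleton]
  rfl

lemma real_inner_eq_inner_orthogonalProjectionOnto_singleton_add (v w₁ w₂ : E) :
    ⟪w₁, w₂⟫ = ⟪(ℝ ∙ v)ᗮ.orthogonalProjectionOnto w₁, (ℝ ∙ v)ᗮ.orthogonalProjectionOnto w₂⟫
      + ⟪v, w₁⟫ * ⟪v, w₂⟫ / ‖v‖ ^ 2 := by
  rcases eq_or_ne v 0 with rfl | hv
  · simp [Submodule.starProjection_top]
  rw [Submodule.coe_inner, coe_orthogonalProjectionOnto_orthogonal_singleton,
    coe_orthogonalProjectionOnto_orthogonal_singleton]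
  simp only [inner_sub_left, inner_sub_right, real_inner_smul_left, real_inner_smul_right,
    real_inner_self_eq_norm_sq, real_inner_comm v]
  field_simp
  ring

lemma inner_orthogonalProjectionOnto_singleton_le {v w₁ w₂ : E}
    (h : 0 ≤ ⟪v, w₁⟫ * ⟪v, w₂⟫) :
    ⟪(ℝ ∙ v)ᗮ.orthogonalProjectionOnto w₁, (ℝ ∙ v)ᗮ.orthogonalProjectionOnto w₂⟫ ≤ ⟪w₁, w₂⟫ := by
  rw [real_inner_eq_inner_orthogonalProjectionOnto_singleton_add v w₁ w₂]
  have := div_nonneg h (sq_nonneg ‖v‖)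
  linarith

variable {v : E} {s : Set E}

lemma Set.Pairwise.image_orthogonalProjectionOnto_singleton
    (hs : s.Pairwise fun a b => ⟪a, b⟫ ≤ 0) (hv : ∀ w ∈ s, ⟪v, w⟫ ≤ 0) :
    ((ℝ ∙ v)ᗮ.orthogonalProjectionOnto '' s).Pairwise fun a b => ⟪a, b⟫ ≤ 0 := by
  rintro _ ⟨w₁, hw₁, rfl⟩ _ ⟨w₂, hw₂, rfl⟩ hne
  have hw : w₁ ≠ w₂ := by rintro rfl; exact hne rfl
  exact (inner_orthogonalProjectionOnto_singleton_le
    (mul_nonneg_of_nonpos_of_nonpos (hv w₁ hw₁) (hv w₂ hw₂))).trans (hs hw₁ hw₂ hw)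

/-- Two points with the same projection would have nonnegative inner product, forcing the
projection to vanish and one of them to be orthogonal to `v`, hence zero. -/
lemma Set.Pairwise.injOn_orthogonalProjectionOnto_singleton (h0 : 0 ∉ s)
    (hs : s.Pairwise fun a b => ⟪a, b⟫ ≤ 0) (hv : ∀ w ∈ s, ⟪v, w⟫ ≤ 0) :
    s.InjOn (ℝ ∙ v)ᗮ.orthogonalProjectionOnto := by
  intro w₁ hw₁ w₂ hw₂ heq
  by_contra hne
  have hsplit := real_inner_eq_inner_orthogonalProjectionOnto_singleton_add v w₁ w₂
  rw [heq, real_inner_self_eq_norm_sq] at hsplit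
  have hc : 0 ≤ ⟪v, w₁⟫ * ⟪v, w₂⟫ / ‖v‖ ^ 2 :=
    div_nonneg (mul_nonneg_of_nonpos_of_nonpos (hv w₁ hw₁) (hv w₂ hw₂)) (sq_nonneg _)
  have hle := hs hw₁ hw₂ hne
  have hP : (ℝ ∙ v)ᗮ.orthogonalProjectionOnto w₂ = 0 := by
    have : ‖(ℝ ∙ v)ᗮ.orthogonalProjectionOnto w₂‖ ^ 2 = 0 := by
      linarith [sq_nonneg ‖(ℝ ∙ v)ᗮ.orthogonalProjectionOnto w₂‖]
    exact norm_eq_zero.mp (pow_eq_zero_iff two_ne_zero |>.mp this)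
  have hc0 : ⟪v, w₁⟫ * ⟪v, w₂⟫ / ‖v‖ ^ 2 = 0 := by
    linarith [sq_nonneg ‖(ℝ ∙ v)ᗮ.orthogonalProjectionOnto w₂‖]
  have hzero : ∀ w, (ℝ ∙ v)ᗮ.orthogonalProjectionOnto w = 0 → ⟪v, w⟫ = 0 → w = 0 := by
    intro w hPw hvw
    simpa [hPw, hvw, eq_comm] using coe_orthogonalProjectionOnto_orthogonal_singleton v w
  rcases (by simpa using hc0 : (⟪v, w₁⟫ = 0 ∨ ⟪v, w₂⟫ = 0) ∨ v = 0) with (h | h) | rfl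
  · exact h0 (hzero w₁ (heq.trans hP) h ▸ hw₁)
  · exact h0 (hzero w₂ hP h ▸ hw₂)
  · exact h0 (hzero w₂ hP (inner_zero_left w₂) ▸ hw₂)

/-- Induction on the dimension: projecting onto `(ℝ ∙ v)ᗮ` for a member `v` is injective on the
other members, hits `0` at most once (at a negative multiple of `v`), and keeps them obtuse. -/
theorem Finset.card_le_two_mul_finrank_of_pairwise_inner_nonpos [FiniteDimensional ℝ E]
    {s : Finset E} (h0 : 0 ∉ s) (hs : (s : Set E).Pairwise fun a b => ⟪a, b⟫ ≤ 0) :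
    #s ≤ 2 * finrank ℝ E := by
  obtain ⟨N, hN⟩ : ∃ N, finrank ℝ E = N := ⟨_, rfl⟩
  induction N generalizing E with
  | zero =>
    have : Subsingleton E := finrank_zero_iff.mp hN
    have : s = ∅ := eq_empty_of_forall_notMem fun w hw => h0 (Subsingleton.elim w 0 ▸ hw)
    simp [this]
  | succ N ih =>
    classical
    rcases s.eq_empty_or_nonempty with rfl | ⟨v, hv⟩
    · simp
    have : Fact (finrank ℝ E = N + 1) := ⟨hN⟩
    have hK : finrank ℝ (ℝ ∙ v)ᗮ = N := Submodule.finrank_orthogonal_span_singleton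
      (ne_of_mem_of_not_mem hv h0)
    set P := (ℝ ∙ v)ᗮ.orthogonalProjectionOnto
    have hrest : ((s.erase v : Finset E) : Set E).Pairwise fun a b => ⟪a, b⟫ ≤ 0 :=
      hs.mono (coe_subset.mpr (erase_subset v s))
    have hvrest : ∀ w ∈ (s.erase v : Set E), ⟪v, w⟫ ≤ 0 := fun w hw =>
      hs hv (mem_of_mem_erase hw) (ne_of_mem_erase hw).symm
    have hinj : Set.InjOn P (s.erase v) := hrest.injOn_orthogonalProjectionOnto_singleton
      (fun h => h0 (mem_of_mem_erase h)) hvrest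
    have hproj : #(((s.erase v).image P).erase 0) ≤ 2 * N := by
      refine hK ▸ ih (notMem_erase 0 _) ((Set.Pairwise.mono ?_
        (hrest.image_orthogonalProjectionOnto_singleton hvrest))) hK
      rw [coe_erase, coe_image]
      exact Set.sdiff_subset
    calc #s = #((s.erase v).image P) + 1 := by rw [card_image_of_injOn hinj, card_erase_add_one hv]
      _ ≤ #(((s.erase v).image P).erase 0) + 1 + 1 := by
        have := pred_card_le_card_erase (s := (s.erase v).image P) (a := 0)
        omega
      _ ≤ 2 * finrank ℝ E := by omega

theorem Set.finite_and_ncard_le_two_mul_finrank_of_pairwise_inner_sub_nonpos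
    [FiniteDimensional ℝ E] {c : E} (hc : c ∉ s)
    (hs : s.Pairwise fun a b => ⟪a - c, b - c⟫ ≤ 0) :
    s.Finite ∧ s.ncard ≤ 2 * finrank ℝ E := by
  classical
  refine Set.finite_and_ncard_le_of_forall_finset_card_le fun t hts => ?_
  have hinj : Function.Injective fun x : E => x - c := sub_left_injective
  rw [← Finset.card_image_of_injective t hinj]
  refine Finset.card_le_two_mul_finrank_of_pairwise_inner_nonpos ?_ ?_
  · simp only [Finset.mem_image, sub_eq_zero, not_exists, not_and]
    exact fun x hx hxc => hc (hxc ▸ hts hx)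
  · rw [coe_image]
    exact hinj.injOn.pairwise_image.mpr (hs.mono hts)

lemma real_inner_sub_sub_nonpos_of_norm_sub_sq_le {a b c : E} {r : ℝ} (ha : ‖a - c‖ ^ 2 ≤ r)
    (hb : ‖b - c‖ ^ 2 ≤ r) (hab : 2 * r ≤ ‖a - b‖ ^ 2) : ⟪a - c, b - c⟫ ≤ 0 := by
  have := norm_sub_sq_real (a - c) (b - c)
  rw [sub_sub_sub_cancel_right] at this
  linarith

end ObtuseFamily

theorem stmt_1_general {n : ℕ} (Λ : AddSubgroup (EuclideanSpace ℝ (Fin n)))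
    (dΛ : ℝ)
    (hdΛ : IsLeast {d : ℝ | ∃ x ∈ Λ, x ≠ (0 : EuclideanSpace ℝ (Fin n)) ∧ ‖x‖ ^ 2 = d} dΛ)
    (r : ℝ) (hr : r ≤ dΛ / 2)
    (y : EuclideanSpace ℝ (Fin n)) :
    {x : EuclideanSpace ℝ (Fin n) | x ∈ Λ ∧ ‖x - y‖ ^ 2 ≤ r}.Finite ∧
      {x : EuclideanSpace ℝ (Fin n) | x ∈ Λ ∧ ‖x - y‖ ^ 2 ≤ r}.ncard ≤ 2 * n := by
  obtain ⟨x₀, -, hx₀, rfl⟩ := hdΛ.1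
  have hsep : ∀ x₁ ∈ Λ, ∀ x₂ ∈ Λ, x₁ ≠ x₂ → ‖x₀‖ ^ 2 ≤ ‖x₁ - x₂‖ ^ 2 := fun x₁ h₁ x₂ h₂ hne =>
    hdΛ.2 ⟨x₁ - x₂, sub_mem h₁ h₂, sub_ne_zero.mpr hne, rfl⟩
  by_cases hy : y ∈ {x | x ∈ Λ ∧ ‖x - y‖ ^ 2 ≤ r}
  · have hn : 0 < n := Nat.pos_of_ne_zero <| by rintro rfl; exact hx₀ (Subsingleton.elim _ _)
    have hsingle : {x | x ∈ Λ ∧ ‖x - y‖ ^ 2 ≤ r} = {y} := by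
      refine Set.eq_singleton_iff_unique_mem.mpr ⟨hy, fun x hx => by_contra fun hne => ?_⟩
      have := hsep x hx.1 y hy.1 hne
      have : 0 < ‖x₀‖ ^ 2 := by positivity
      linarith [hx.2]
    rw [hsingle, Set.ncard_singleton]
    exact ⟨Set.finite_singleton y, by omega⟩
  · simpa using Set.finite_and_ncard_le_two_mul_finrank_of_pairwise_inner_sub_nonpos hy
      fun x₁ h₁ x₂ h₂ hne => real_inner_sub_sub_nonpos_of_norm_sub_sq_le h₁.2 h₂.2
        (by linarith [hsep x₁ h₁.1 x₂ h₂.1 hne])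

/-- Johnson-type bound on list size (second case): if `r ≤ d(Λ)/2`, then the list
`Λ ∩ B_r(y)` is finite with at most `2n` elements. -/
theorem stmt_1 {n : ℕ} (Λ : AddSubgroup (EuclideanSpace ℝ (Fin n)))
    [DiscreteTopology Λ]
    (hΛne : ∃ x ∈ Λ, x ≠ (0 : EuclideanSpace ℝ (Fin n)))
    (dΛ : ℝ)
    (hdΛ : IsLeast {d : ℝ | ∃ x ∈ Λ, x ≠ (0 : EuclideanSpace ℝ (Fin n)) ∧ ‖x‖ ^ 2 = d} dΛ)
    (r : ℝ) (hr0 : 0 ≤ r) (hr : r ≤ dΛ / 2)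
    (y : EuclideanSpace ℝ (Fin n)) :
    {x : EuclideanSpace ℝ (Fin n) | x ∈ Λ ∧ ‖x - y‖ ^ 2 ≤ r}.Finite ∧
      {x : EuclideanSpace ℝ (Fin n) | x ∈ Λ ∧ ‖x - y‖ ^ 2 ≤ r}.ncard ≤ 2 * n :=
  stmt_1_general Λ dΛ hdΛ r hr y
end

section
/- Let T be a discrete additive subgroup of ℝ^n, let V ⊆ T be a subgroup containing a nonzero element, and let k ≥ 2. Then the single parity-check lattice Γ(V,T,k)_P = {(t₁,…,t_k) ∈ T^k : t₁ + ⋯ + t_k ∈ V} satisfies d(Γ(V,T,k)_P) = min{d(V), 2·d(T)}, where d(·) denotes the minimum of the squared Euclidean norm over nonzero elements. -/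
/-- The minimum distance of the single parity-check lattice
`Γ(V,T,k)_P = {(t₁,…,t_k) ∈ T^k : t₁ + ⋯ + t_k ∈ V}` equals `min (d V) (2 · d T)`. -/
theorem stmt_2 {n : ℕ} (k : ℕ) (hk : 2 ≤ k)
    (T V : AddSubgroup (EuclideanSpace ℝ (Fin n)))
    [DiscreteTopology T]
    (hVT : V ≤ T)
    (hVne : ∃ v ∈ V, v ≠ (0 : EuclideanSpace ℝ (Fin n)))
    (dV dT : ℝ)
    (hdV : IsLeast {d : ℝ | ∃ x ∈ V, x ≠ (0 : EuclideanSpace ℝ (Fin n)) ∧ ‖x‖ ^ 2 = d} dV)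
    (hdT : IsLeast {d : ℝ | ∃ x ∈ T, x ≠ (0 : EuclideanSpace ℝ (Fin n)) ∧ ‖x‖ ^ 2 = d} dT) :
    IsLeast {d : ℝ | ∃ x : Fin k → EuclideanSpace ℝ (Fin n),
        (∀ i, x i ∈ T) ∧ (∑ i, x i) ∈ V ∧ x ≠ 0 ∧ (∑ i, ‖x i‖ ^ 2) = d}
      (min dV (2 * dT)) := by
  obtain ⟨v, hvV, hvne, hveq⟩ := hdV.1
  obtain ⟨t, htT, htne, hteq⟩ := hdT.1
  have i0 : Fin k := ⟨0, by omega⟩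
  constructor
  · rcases le_or_gt dV (2 * dT) with h | h
    · rw [min_eq_left h]
      refine ⟨fun j => if j = (⟨0, by omega⟩ : Fin k) then v else 0, ?_, ?_, ?_, ?_⟩
      · intro i; dsimp only; split
        · exact hVT hvV
        · exact T.zero_mem
      · simp [Finset.sum_ite_eq', hvV]
      · intro h0
        have := congrFun h0 ⟨0, by omega⟩
        simp at this; exact hvne this
      · rw [show (∑ j : Fin k, ‖if j = (⟨0, by omega⟩ : Fin k) then v else 0‖ ^ 2)
            = ∑ j : Fin k, if j = (⟨0, by omega⟩ : Fin k) then ‖v‖ ^ 2 else 0 by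
            apply Finset.sum_congr rfl; intro j _; split <;> simp]
        simp [Finset.sum_ite_eq', hveq]
    · rw [min_eq_right h.le]
      have hne01 : (⟨0, by omega⟩ : Fin k) ≠ ⟨1, by omega⟩ := by
        intro hc; simpa using congrArg Fin.val hc
      set f : Fin k → EuclideanSpace ℝ (Fin n) :=
        fun j => if j = (⟨0, by omega⟩ : Fin k) then t
          else if j = (⟨1, by omega⟩ : Fin k) then -t else 0 with hf
      refine ⟨f, ?_, ?_, ?_, ?_⟩
      · intro i; simp only [hf]; split
        · exact htT
        · split
          · exact T.neg_mem htT
          · exact T.zero_mem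
      · have step : ∑ j, f j = ∑ j ∈ ({⟨0, by omega⟩, ⟨1, by omega⟩} : Finset (Fin k)), f j := by
          refine (Finset.sum_subset (Finset.subset_univ _) ?_).symm
          intro l _ hl
          simp only [Finset.mem_insert, Finset.mem_singleton, not_or] at hl
          simp [hf, hl.1, hl.2]
        rw [step, Finset.sum_pair hne01]
        simp [hf, hne01.symm, V.zero_mem]
      · intro h0
        have := congrFun h0 ⟨0, by omega⟩
        simp [hf] at this; exact htne this
      · have step : (∑ j, ‖f j‖ ^ 2)
            = ∑ j ∈ ({⟨0, by omega⟩, ⟨1, by omega⟩} : Finset (Fin k)), ‖f j‖ ^ 2 := by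
          refine (Finset.sum_subset (Finset.subset_univ _) ?_).symm
          intro l _ hl
          simp only [Finset.mem_insert, Finset.mem_singleton, not_or] at hl
          simp [hf, hl.1, hl.2]
        rw [step, Finset.sum_pair hne01]
        simp only [hf, if_pos rfl, if_neg hne01.symm]
        simp [hteq]
        linarith [hteq]
  · rintro d ⟨x, hxT, hxV, hxne, rfl⟩
    have hx : ∃ i, x i ≠ 0 := by
      by_contra hc; push_neg at hc; exact hxne (funext hc)
    obtain ⟨i, hi⟩ := hx
    by_cases hj : ∃ j, j ≠ i ∧ x j ≠ 0
    · obtain ⟨j, hji, hj0⟩ := hj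
      have h1 : dT ≤ ‖x i‖ ^ 2 := hdT.2 ⟨x i, hxT i, hi, rfl⟩
      have h2 : dT ≤ ‖x j‖ ^ 2 := hdT.2 ⟨x j, hxT j, hj0, rfl⟩
      have h3 : ∑ l ∈ ({i, j} : Finset (Fin k)), ‖x l‖ ^ 2 ≤ ∑ l, ‖x l‖ ^ 2 :=
        Finset.sum_le_sum_of_subset_of_nonneg (Finset.subset_univ _)
          (fun l _ _ => sq_nonneg _)
      rw [Finset.sum_pair (Ne.symm hji)] at h3
      calc min dV (2 * dT) ≤ 2 * dT := min_le_right _ _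
        _ ≤ ∑ l, ‖x l‖ ^ 2 := by linarith
    · push_neg at hj
      have hsum : ∑ l, x l = x i :=
        Finset.sum_eq_single i (fun l _ hl => hj l hl) (by simp)
      have hxiV : x i ∈ V := hsum ▸ hxV
      have h1 : dV ≤ ‖x i‖ ^ 2 := hdV.2 ⟨x i, hxiV, hi, rfl⟩
      have h2 : (∑ l, ‖x l‖ ^ 2) = ‖x i‖ ^ 2 :=
        Finset.sum_eq_single i (fun l _ hl => by rw [hj l hl]; simp) (by simp)
      rw [h2]
      exact le_trans (min_le_left _ _) h1
end

section
/- Let T and T* be discrete additive subgroups of ℝ^n such that V = T ∩ T* contains a nonzero element and S = T + T* is discrete, and let k ≥ 2. Define the k-ing lattice Γ = {(m + t₁, …, m + t_k) : m ∈ T*, tᵢ ∈ T, t₁ + ⋯ + t_k ∈ V} ⊆ S^k. Then the minimum distance of Γ satisfies min{d(V), 2·d(T)} ≥ d(Γ) ≥ min{d(V), 2·d(T), k·d(S)}, where d(·) denotes the minimum of the squared Euclidean norm over nonzero elements. -/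
/-- Minimum distance bounds for the k-ing construction:
`min {d(V), 2·d(T)} ≥ d(Γ) ≥ min {d(V), 2·d(T), k·d(S)}`. -/
theorem stmt_5 {n : ℕ} (k : ℕ) (hk : 2 ≤ k)
    (T Tstar S V : AddSubgroup (EuclideanSpace ℝ (Fin n)))
    [DiscreteTopology T] [DiscreteTopology Tstar] [DiscreteTopology S]
    (hV : V = T ⊓ Tstar)
    (hS : (S : Set (EuclideanSpace ℝ (Fin n))) =
      {x | ∃ t ∈ T, ∃ m ∈ Tstar, x = t + m})
    (hVne : ∃ v ∈ V, v ≠ (0 : EuclideanSpace ℝ (Fin n)))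
    (dV dT dS dΓ : ℝ)
    (hdV : IsLeast {d : ℝ | ∃ x ∈ V, x ≠ (0 : EuclideanSpace ℝ (Fin n)) ∧ ‖x‖ ^ 2 = d} dV)
    (hdT : IsLeast {d : ℝ | ∃ x ∈ T, x ≠ (0 : EuclideanSpace ℝ (Fin n)) ∧ ‖x‖ ^ 2 = d} dT)
    (hdS : IsLeast {d : ℝ | ∃ x ∈ S, x ≠ (0 : EuclideanSpace ℝ (Fin n)) ∧ ‖x‖ ^ 2 = d} dS)
    (hdΓ : IsLeast {d : ℝ | ∃ x : Fin k → EuclideanSpace ℝ (Fin n),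
        (∃ m ∈ Tstar, ∃ t : Fin k → EuclideanSpace ℝ (Fin n),
          (∀ i, t i ∈ T) ∧ (∑ i, t i) ∈ V ∧ ∀ i, x i = m + t i) ∧
        x ≠ 0 ∧ (∑ i, ‖x i‖ ^ 2) = d} dΓ) :
    dΓ ≤ min dV (2 * dT) ∧ min (min dV (2 * dT)) ((k : ℝ) * dS) ≤ dΓ := by
  have hkpos : 0 < k := by omega
  set i0 : Fin k := ⟨0, by omega⟩
  set i1 : Fin k := ⟨1, by omega⟩
  have hi01 : i0 ≠ i1 := by simp [i0, i1, Fin.ext_iff]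
  obtain ⟨dΓmem, dΓlb⟩ := hdΓ
  constructor
  · refine le_min ?_ ?_
    · -- dΓ ≤ dV
      obtain ⟨v, hvV, hvne, hv⟩ := hdV.1
      have hvT : v ∈ T := by rw [hV] at hvV; exact hvV.1
      refine dΓlb ⟨fun i => if i = i0 then v else 0, ⟨0, zero_mem _,
        fun i => if i = i0 then v else 0, fun i => ?_, ?_, fun i => by simp⟩, ?_, ?_⟩
      · dsimp only; split <;> [exact hvT; exact zero_mem _]
      · simpa using hvV
      · intro h
        have := congrFun h i0
        simp at this
        exact hvne this
      · rw [← hv]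
        have : ∀ i : Fin k, ‖(if i = i0 then v else 0 : EuclideanSpace ℝ (Fin n))‖ ^ 2
            = if i = i0 then ‖v‖ ^ 2 else 0 := by
          intro i; split <;> simp
        rw [Finset.sum_congr rfl (fun i _ => this i)]
        simp
    · -- dΓ ≤ 2 * dT
      obtain ⟨w, hwT, hwne, hw⟩ := hdT.1
      set f : Fin k → EuclideanSpace ℝ (Fin n) :=
        fun i => if i = i0 then w else if i = i1 then -w else 0 with hf
      have hfsum : ∑ i, f i = 0 := by
        rw [← Finset.sum_subset (Finset.subset_univ {i0, i1})
          (fun i _ hi => by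
            simp only [Finset.mem_insert, Finset.mem_singleton, not_or] at hi
            simp [hf, hi.1, hi.2])]
        rw [Finset.sum_pair hi01]
        simp [hf, hi01.symm]
      refine dΓlb ⟨f, ⟨0, zero_mem _, f, fun i => ?_, ?_, fun i => by simp⟩, ?_, ?_⟩
      · simp only [hf]
        split
        · exact hwT
        · split <;> [exact neg_mem hwT; exact zero_mem _]
      · rw [hfsum]; exact zero_mem _
      · intro h
        have := congrFun h i0
        simp [hf] at this
        exact hwne this
      · have : ∀ i : Fin k, ‖f i‖ ^ 2 =
            if i = i0 then ‖w‖ ^ 2 else if i = i1 then ‖w‖ ^ 2 else 0 := by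
          intro i; simp only [hf]; split
          · rfl
          · split <;> simp
        rw [Finset.sum_congr rfl (fun i _ => this i)]
        rw [← Finset.sum_subset (Finset.subset_univ {i0, i1})
          (fun i _ hi => by
            simp only [Finset.mem_insert, Finset.mem_singleton, not_or] at hi
            simp [hi.1, hi.2])]
        rw [Finset.sum_pair hi01]
        simp [hi01.symm, hw]
        ring
  · -- lower bound
    obtain ⟨x, ⟨m, hm, t, ht, htV, hx⟩, hxne, hsum⟩ := dΓmem
    rw [← hsum]
    by_cases hmT : m ∈ T
    · -- each x i ∈ T
      have hxT : ∀ i, x i ∈ T := fun i => by rw [hx i]; exact add_mem hmT (ht i)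
      by_cases htwo : ∃ i j, i ≠ j ∧ x i ≠ 0 ∧ x j ≠ 0
      · obtain ⟨i, j, hij, hi, hj⟩ := htwo
        have h1 : dT ≤ ‖x i‖ ^ 2 := hdT.2 ⟨x i, hxT i, hi, rfl⟩
        have h2 : dT ≤ ‖x j‖ ^ 2 := hdT.2 ⟨x j, hxT j, hj, rfl⟩
        have hsub : ∑ l ∈ ({i, j} : Finset (Fin k)), ‖x l‖ ^ 2 ≤ ∑ l, ‖x l‖ ^ 2 :=
          Finset.sum_le_sum_of_subset_of_nonneg (Finset.subset_univ _)
            (fun l _ _ => sq_nonneg _)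
        rw [Finset.sum_pair hij] at hsub
        calc min (min dV (2 * dT)) (↑k * dS) ≤ 2 * dT :=
              (min_le_left _ _).trans (min_le_right _ _)
          _ ≤ ‖x i‖ ^ 2 + ‖x j‖ ^ 2 := by linarith
          _ ≤ _ := hsub
      · -- exactly one nonzero coordinate
        push_neg at htwo
        obtain ⟨j, hj⟩ : ∃ j, x j ≠ 0 := by
          by_contra h; push_neg at h; exact hxne (funext fun i => h i)
        have hz : ∀ i, i ≠ j → x i = 0 := by
          intro i hij
          by_contra hi
          exact hj (htwo i j hij hi)
        have hsumx : ∑ i, x i = x j := by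
          rw [← Finset.sum_subset (Finset.subset_univ {j})
            (fun i _ hi => hz i (by simpa using hi))]
          simp
        have hsumx2 : ∑ i, x i = k • m + ∑ i, t i := by
          rw [Finset.sum_congr rfl (fun i _ => hx i), Finset.sum_add_distrib]
          simp
        have hmV : m ∈ V := by rw [hV]; exact ⟨hmT, hm⟩
        have hxjV : x j ∈ V := by
          rw [← hsumx, hsumx2]
          exact add_mem (AddSubgroup.nsmul_mem V hmV k) htV
        have h1 : dV ≤ ‖x j‖ ^ 2 := hdV.2 ⟨x j, hxjV, hj, rfl⟩
        calc min (min dV (2 * dT)) (↑k * dS) ≤ dV :=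
              (min_le_left _ _).trans (min_le_left _ _)
          _ ≤ ‖x j‖ ^ 2 := h1
          _ ≤ _ := Finset.single_le_sum (fun i _ => sq_nonneg (‖x i‖))
              (Finset.mem_univ j)
      
    · -- m ∉ T : all coordinates nonzero, in S
      have hxS : ∀ i, x i ∈ S := by
        intro i
        have : x i ∈ (S : Set (EuclideanSpace ℝ (Fin n))) := by
          rw [hS]
          exact ⟨t i, ht i, m, hm, by rw [hx i, add_comm]⟩
        exact this
      have hxne' : ∀ i, x i ≠ 0 := by
        intro i h
        apply hmT
        have h0 : m + t i = 0 := by rw [← hx i, h]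
        have : m = -t i := eq_neg_of_add_eq_zero_left h0
        rw [this]
        exact neg_mem (ht i)
      have h1 : ∀ i, dS ≤ ‖x i‖ ^ 2 := fun i => hdS.2 ⟨x i, hxS i, hxne' i, rfl⟩
      calc min (min dV (2 * dT)) (↑k * dS) ≤ ↑k * dS := min_le_right _ _
        _ = ∑ _i : Fin k, dS := by
            rw [Finset.sum_const, Finset.card_univ, Fintype.card_fin, nsmul_eq_mul]
        _ ≤ _ := Finset.sum_le_sum (fun i _ => h1 i)
end

section
/- Let S be an additive subgroup of ℝ^n such that 2⟨s, s′⟩ ∈ ℤ for all s, s′ ∈ S (where ⟨·,·⟩ is the standard inner product), and let T, T* ⊆ S be subgroups such that ‖t‖² is an even integer for every t ∈ T and every t ∈ T*. Then for every m ∈ T* and t₁, t₂, t₃ ∈ T with t₁ + t₂ + t₃ ∈ 2S, the vector x = (m + t₁, m + t₂, m + t₃) ∈ (ℝ^n)³ has squared Euclidean norm ‖x‖² = ‖m+t₁‖² + ‖m+t₂‖² + ‖m+t₃‖² equal to an even integer. -/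
/-! Expanding the squares, the cross terms add up to `2⟨m, t₁ + t₂ + t₃⟩ = 2 · (2⟨m, s⟩)`, which
is even because `2⟨m, s⟩ ∈ ℤ`; the remaining terms `3‖m‖² + ‖t₁‖² + ‖t₂‖² + ‖t₃‖²` are even
integers by hypothesis. -/

theorem norm_add_sq_add_norm_add_sq_add_norm_add_sq_of_add_eq_add_self {E : Type*}
    [NormedAddCommGroup E] [InnerProductSpace ℝ E] {m t₁ t₂ t₃ s : E}
    (h : t₁ + t₂ + t₃ = s + s) :
    ‖m + t₁‖ ^ 2 + ‖m + t₂‖ ^ 2 + ‖m + t₃‖ ^ 2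
      = 3 * ‖m‖ ^ 2 + 2 * (2 * inner ℝ m s) + (‖t₁‖ ^ 2 + ‖t₂‖ ^ 2 + ‖t₃‖ ^ 2) := by
  have hinner : inner ℝ m t₁ + inner ℝ m t₂ + inner ℝ m t₃ = 2 * inner ℝ m s := by
    rw [← inner_add_right, ← inner_add_right, h, inner_add_right]
    ring
  simp only [norm_add_sq_real]
  linarith

theorem stmt_8_general {n : ℕ}
    (S T Tstar : AddSubgroup (EuclideanSpace ℝ (Fin n)))
    (hTstarS : Tstar ≤ S)
    (hint : ∀ s ∈ S, ∀ s' ∈ S, ∃ z : ℤ, 2 * (inner ℝ s s' : ℝ) = (z : ℝ))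
    (hTeven : ∀ t ∈ T, ∃ z : ℤ, Even z ∧ ‖t‖ ^ 2 = (z : ℝ))
    (hTstareven : ∀ t ∈ Tstar, ∃ z : ℤ, Even z ∧ ‖t‖ ^ 2 = (z : ℝ))
    (m : EuclideanSpace ℝ (Fin n)) (hm : m ∈ Tstar)
    (t₁ t₂ t₃ : EuclideanSpace ℝ (Fin n))
    (ht₁ : t₁ ∈ T) (ht₂ : t₂ ∈ T) (ht₃ : t₃ ∈ T)
    (hsum : ∃ s ∈ S, t₁ + t₂ + t₃ = s + s) :
    ∃ z : ℤ, Even z ∧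
      ‖m + t₁‖ ^ 2 + ‖m + t₂‖ ^ 2 + ‖m + t₃‖ ^ 2 = (z : ℝ) := by
  obtain ⟨s, hs, hsum⟩ := hsum
  obtain ⟨a, ha, hnorm_m⟩ := hTstareven m hm
  obtain ⟨b₁, hb₁, hnorm_t₁⟩ := hTeven t₁ ht₁
  obtain ⟨b₂, hb₂, hnorm_t₂⟩ := hTeven t₂ ht₂
  obtain ⟨b₃, hb₃, hnorm_t₃⟩ := hTeven t₃ ht₃
  obtain ⟨c, hinner⟩ := hint m (hTstarS hm) s hs
  refine ⟨3 * a + 2 * c + (b₁ + b₂ + b₃),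
    ((ha.mul_left 3).add (even_two_mul c)).add ((hb₁.add hb₂).add hb₃), ?_⟩
  rw [norm_add_sq_add_norm_add_sq_add_norm_add_sq_of_add_eq_add_self hsum,
    hnorm_m, hinner, hnorm_t₁, hnorm_t₂, hnorm_t₃]
  push_cast
  ring

/-- Evenness in Turyn's construction: if `2⟨s,s'⟩ ∈ ℤ` on `S` and `T, T* ⊆ S` are even, then
any `(m+t₁, m+t₂, m+t₃)` with `m ∈ T*`, `tᵢ ∈ T`, `t₁+t₂+t₃ ∈ 2S` has even integer
squared norm. -/
theorem stmt_8 {n : ℕ}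
    (S T Tstar : AddSubgroup (EuclideanSpace ℝ (Fin n)))
    (hTS : T ≤ S) (hTstarS : Tstar ≤ S)
    (hint : ∀ s ∈ S, ∀ s' ∈ S, ∃ z : ℤ, 2 * (inner ℝ s s' : ℝ) = (z : ℝ))
    (hTeven : ∀ t ∈ T, ∃ z : ℤ, Even z ∧ ‖t‖ ^ 2 = (z : ℝ))
    (hTstareven : ∀ t ∈ Tstar, ∃ z : ℤ, Even z ∧ ‖t‖ ^ 2 = (z : ℝ))
    (m : EuclideanSpace ℝ (Fin n)) (hm : m ∈ Tstar)
    (t₁ t₂ t₃ : EuclideanSpace ℝ (Fin n))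
    (ht₁ : t₁ ∈ T) (ht₂ : t₂ ∈ T) (ht₃ : t₃ ∈ T)
    (hsum : ∃ s ∈ S, t₁ + t₂ + t₃ = s + s) :
    ∃ z : ℤ, Even z ∧
      ‖m + t₁‖ ^ 2 + ‖m + t₂‖ ^ 2 + ‖m + t₃‖ ^ 2 = (z : ℝ) :=
  stmt_8_general S T Tstar hTstarS hint hTeven hTstareven m hm t₁ t₂ t₃ ht₁ ht₂ ht₃ hsum
end

section
/- Let T and T* be discrete additive subgroups of ℝ^n, set S = T + T*, and suppose: (i) 2⟨s, s′⟩ ∈ ℤ for all s, s′ ∈ S; (ii) ‖t‖² is an even integer for every t ∈ T and every t ∈ T*; (iii) T ∩ T* = 2S; (iv) S contains an element of squared norm 1 and every nonzero s ∈ S satisfies ‖s‖² ≥ 1. Then the Turyn lattice Γ = {(m + t₁, m + t₂, m + t₃) : m ∈ T*, tᵢ ∈ T, t₁ + t₂ + t₃ ∈ 2S} ⊆ S³ is an even lattice (i.e., ‖x‖² is an even integer for all x ∈ Γ) whose minimum distance equals 4: every nonzero x ∈ Γ has ‖x‖² ≥ 4, and some x ∈ Γ has ‖x‖² = 4. -/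
/-!
Every vector of `Γ` lies in `S³`, and `‖(m + tᵢ)ᵢ‖² = 3‖m‖² + 4⟪m, s⟫ + ∑ ‖tᵢ‖²` when
`t₁ + t₂ + t₃ = 2s`; hypotheses (i) and (ii) make this an even integer. For the minimum, if `m ∉ T`
no coordinate vanishes, so the norm is at least `3`, hence at least `4` by evenness. If `m ∈ T`, then
`m ∈ T ∩ T* = 2S` and all coordinates lie in the even lattice `T`: either two coordinates are nonzero,
each of norm at least `2`, or a single one is, and it equals the sum of the coordinates, which lies
in `2S` and so has norm at least `4`. The vector `(2s, 0, 0)` with `‖s‖² = 1` attains `4`.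
-/

open Finset RealInnerProductSpace

lemma two_le_intCast_of_even {z : ℤ} (hz : Even z) (hpos : (0 : ℝ) < z) : (2 : ℝ) ≤ z := by
  have hpos : 0 < z := by exact_mod_cast hpos
  obtain ⟨k, rfl⟩ := hz
  exact_mod_cast (show 2 ≤ k + k by omega)

lemma four_le_intCast_of_even {z : ℤ} (hz : Even z) (h3 : (3 : ℝ) ≤ z) : (4 : ℝ) ≤ z := by
  have h3 : 3 ≤ z := by exact_mod_cast h3
  obtain ⟨k, rfl⟩ := hz
  exact_mod_cast (show 4 ≤ k + k by omega)

section

variable {E : Type*} [NormedAddCommGroup E]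

lemma four_le_sum_norm_sq {ι : Type*} [Fintype ι] {y : ι → E} (hy : y ≠ 0)
    (h2 : ∀ i, y i ≠ 0 → 2 ≤ ‖y i‖ ^ 2) (h4 : ∑ i, y i ≠ 0 → 4 ≤ ‖∑ i, y i‖ ^ 2) :
    4 ≤ ∑ i, ‖y i‖ ^ 2 := by
  classical
  obtain ⟨k, hk⟩ := Function.ne_iff.mp hy
  by_cases hpair : ∃ l ≠ k, y l ≠ 0
  · obtain ⟨l, hlk, hl⟩ := hpair
    calc (4 : ℝ) ≤ ‖y l‖ ^ 2 + ‖y k‖ ^ 2 := by linarith [h2 l hl, h2 k hk]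
      _ = ∑ i ∈ {l, k}, ‖y i‖ ^ 2 := (sum_pair (f := fun i => ‖y i‖ ^ 2) hlk).symm
      _ ≤ ∑ i, ‖y i‖ ^ 2 :=
        sum_le_sum_of_subset_of_nonneg (subset_univ _) fun i _ _ => by positivity
  · push Not at hpair
    have hsum : ∑ i, y i = y k := sum_eq_single k (fun i _ hik => hpair i hik) (by simp)
    calc (4 : ℝ) ≤ ‖y k‖ ^ 2 := hsum ▸ h4 (hsum ▸ hk)
      _ ≤ ∑ i, ‖y i‖ ^ 2 :=
        single_le_sum (f := fun i => ‖y i‖ ^ 2) (fun i _ => by positivity) (mem_univ k)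

variable [InnerProductSpace ℝ E]

lemma norm_add_self_sq (u : E) : ‖u + u‖ ^ 2 = 4 * ‖u‖ ^ 2 := by
  rw [← two_smul ℝ u, norm_smul, Real.norm_two]
  ring

lemma sum_norm_add_sq {ι : Type*} [Fintype ι] (m : E) (t : ι → E) :
    ∑ i, ‖m + t i‖ ^ 2 =
      Fintype.card ι * ‖m‖ ^ 2 + 2 * ⟪m, ∑ i, t i⟫ + ∑ i, ‖t i‖ ^ 2 := by
  simp only [norm_add_sq_real, sum_add_distrib, inner_sum, mul_sum, sum_const, card_univ,
    nsmul_eq_mul]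

/-- Turyn's construction `Γ(2S, T*, T, 3)`. -/
def turyn (T Tstar S : AddSubgroup E) : Set (Fin 3 → E) :=
  {x | ∃ m ∈ Tstar, ∃ t : Fin 3 → E,
    (∀ i, t i ∈ T) ∧ (∃ s ∈ S, t 0 + t 1 + t 2 = s + s) ∧ ∀ i, x i = m + t i}

variable {T Tstar S : AddSubgroup E}

lemma even_sum_norm_sq_of_mem_turyn (hTstarS : Tstar ≤ S)
    (hint : ∀ s ∈ S, ∀ s' ∈ S, ∃ z : ℤ, 2 * ⟪s, s'⟫ = z)
    (hTeven : ∀ t ∈ T, ∃ z : ℤ, Even z ∧ ‖t‖ ^ 2 = z)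
    (hTstareven : ∀ t ∈ Tstar, ∃ z : ℤ, Even z ∧ ‖t‖ ^ 2 = z)
    {x : Fin 3 → E} (hx : x ∈ turyn T Tstar S) :
    ∃ z : ℤ, Even z ∧ ∑ i, ‖x i‖ ^ 2 = z := by
  obtain ⟨m, hm, t, ht, ⟨s, hs, hsum⟩, hxe⟩ := hx
  obtain ⟨zm, hzm, hzm'⟩ := hTstareven m hm
  obtain ⟨z0, hz0, hz0'⟩ := hTeven (t 0) (ht 0)
  obtain ⟨z1, hz1, hz1'⟩ := hTeven (t 1) (ht 1)
  obtain ⟨z2, hz2, hz2'⟩ := hTeven (t 2) (ht 2)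
  obtain ⟨w, hw⟩ := hint m (hTstarS hm) s hs
  refine ⟨3 * zm + 2 * w + (z0 + z1 + z2), by simp [Int.even_add, *], ?_⟩
  simp only [hxe, sum_norm_add_sq, Fin.sum_univ_three, hsum, inner_add_right, Fintype.card_fin]
  push_cast
  linear_combination 3 * hzm' + hz0' + hz1' + hz2' + 2 * hw

lemma four_le_sum_norm_sq_of_mem_turyn (hTS : T ≤ S) (hTstarS : Tstar ≤ S)
    (hint : ∀ s ∈ S, ∀ s' ∈ S, ∃ z : ℤ, 2 * ⟪s, s'⟫ = z)
    (hTeven : ∀ t ∈ T, ∃ z : ℤ, Even z ∧ ‖t‖ ^ 2 = z)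
    (hTstareven : ∀ t ∈ Tstar, ∃ z : ℤ, Even z ∧ ‖t‖ ^ 2 = z)
    (hcap : ∀ x ∈ T, x ∈ Tstar → ∃ s ∈ S, x = s + s)
    (hSmin : ∀ s ∈ S, s ≠ 0 → 1 ≤ ‖s‖ ^ 2)
    {x : Fin 3 → E} (hx : x ∈ turyn T Tstar S) (hx0 : x ≠ 0) :
    4 ≤ ∑ i, ‖x i‖ ^ 2 := by
  obtain ⟨z, hz, hzx⟩ := even_sum_norm_sq_of_mem_turyn hTstarS hint hTeven hTstareven hx
  obtain ⟨m, hm, t, ht, ⟨s, hs, hsum⟩, hxe⟩ := hx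
  by_cases hmT : m ∈ T
  · obtain ⟨s₀, hs₀, rfl⟩ := hcap m hmT hm
    have hxT : ∀ i, x i ∈ T := fun i => hxe i ▸ T.add_mem hmT (ht i)
    refine four_le_sum_norm_sq hx0 (fun i hi => ?_) fun hne => ?_
    · obtain ⟨zi, hzi, hzi'⟩ := hTeven (x i) (hxT i)
      rw [hzi']
      exact two_le_intCast_of_even hzi (hzi' ▸ pow_pos (norm_pos_iff.2 hi) 2)
    · have hxsum : ∑ i, x i = (s₀ + s₀ + s₀ + s) + (s₀ + s₀ + s₀ + s) := by
        rw [Fin.sum_univ_three, hxe, hxe, hxe]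
        calc _ = 3 • (s₀ + s₀) + (t 0 + t 1 + t 2) := by abel
          _ = _ := by rw [hsum]; abel
      have hu : s₀ + s₀ + s₀ + s ≠ 0 := fun hu => hne (by rw [hxsum, hu, add_zero])
      have hu1 := hSmin _ (S.add_mem (S.add_mem (S.add_mem hs₀ hs₀) hs₀) hs) hu
      rw [hxsum, norm_add_self_sq]
      linarith
  · have hxne : ∀ i, x i ≠ 0 := fun i h0 =>
      hmT (eq_neg_of_add_eq_zero_left ((hxe i).symm.trans h0) ▸ T.neg_mem (ht i))
    have hxS : ∀ i, x i ∈ S := fun i => hxe i ▸ S.add_mem (hTstarS hm) (hTS (ht i))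
    have h1 : ∀ i, 1 ≤ ‖x i‖ ^ 2 := fun i => hSmin (x i) (hxS i) (hxne i)
    have h3 : 3 ≤ ∑ i, ‖x i‖ ^ 2 := by
      rw [Fin.sum_univ_three]
      linarith [h1 0, h1 1, h1 2]
    rw [hzx] at h3 ⊢
    exact four_le_intCast_of_even hz h3

lemma exists_mem_turyn_sum_norm_sq_eq_four (hSone : ∃ s ∈ S, ‖s‖ ^ 2 = 1)
    (htwoS : ∀ s ∈ S, s + s ∈ T) :
    ∃ x ∈ turyn T Tstar S, ∑ i, ‖x i‖ ^ 2 = 4 := by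
  obtain ⟨s, hs, hs1⟩ := hSone
  refine ⟨![s + s, 0, 0], ⟨0, Tstar.zero_mem, ![s + s, 0, 0], ?_, ⟨s, hs, by simp⟩, ?_⟩, ?_⟩
  · intro i
    fin_cases i <;> simp [htwoS s hs, T.zero_mem]
  · intro i
    simp
  · simp [Fin.sum_univ_three, norm_add_self_sq, hs1]

end

theorem stmt_9_general {n : ℕ}
    (T Tstar S : AddSubgroup (EuclideanSpace ℝ (Fin n)))
    (hS : (S : Set (EuclideanSpace ℝ (Fin n))) =
      {x | ∃ t ∈ T, ∃ m ∈ Tstar, x = t + m})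
    (hint : ∀ s ∈ S, ∀ s' ∈ S, ∃ z : ℤ, 2 * (inner ℝ s s' : ℝ) = (z : ℝ))
    (hTeven : ∀ t ∈ T, ∃ z : ℤ, Even z ∧ ‖t‖ ^ 2 = (z : ℝ))
    (hTstareven : ∀ t ∈ Tstar, ∃ z : ℤ, Even z ∧ ‖t‖ ^ 2 = (z : ℝ))
    (hcap : ∀ x : EuclideanSpace ℝ (Fin n), (x ∈ T ∧ x ∈ Tstar) ↔ ∃ s ∈ S, x = s + s)
    (hSone : ∃ s ∈ S, ‖s‖ ^ 2 = 1)
    (hSmin : ∀ s ∈ S, s ≠ (0 : EuclideanSpace ℝ (Fin n)) → 1 ≤ ‖s‖ ^ 2) :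
    (∀ x : Fin 3 → EuclideanSpace ℝ (Fin n),
      (∃ m ∈ Tstar, ∃ t : Fin 3 → EuclideanSpace ℝ (Fin n),
        (∀ i, t i ∈ T) ∧ (∃ s ∈ S, t 0 + t 1 + t 2 = s + s) ∧ ∀ i, x i = m + t i) →
      ∃ z : ℤ, Even z ∧ (∑ i, ‖x i‖ ^ 2) = (z : ℝ)) ∧
    (∀ x : Fin 3 → EuclideanSpace ℝ (Fin n),
      (∃ m ∈ Tstar, ∃ t : Fin 3 → EuclideanSpace ℝ (Fin n),
        (∀ i, t i ∈ T) ∧ (∃ s ∈ S, t 0 + t 1 + t 2 = s + s) ∧ ∀ i, x i = m + t i) →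
      x ≠ 0 → (4 : ℝ) ≤ ∑ i, ‖x i‖ ^ 2) ∧
    (∃ x : Fin 3 → EuclideanSpace ℝ (Fin n),
      (∃ m ∈ Tstar, ∃ t : Fin 3 → EuclideanSpace ℝ (Fin n),
        (∀ i, t i ∈ T) ∧ (∃ s ∈ S, t 0 + t 1 + t 2 = s + s) ∧ ∀ i, x i = m + t i) ∧
      (∑ i, ‖x i‖ ^ 2) = (4 : ℝ)) := by
  have hTS : T ≤ S := fun t ht => by
    rw [← SetLike.mem_coe, hS]
    exact ⟨t, ht, 0, Tstar.zero_mem, (add_zero t).symm⟩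
  have hTstarS : Tstar ≤ S := fun m hm => by
    rw [← SetLike.mem_coe, hS]
    exact ⟨0, T.zero_mem, m, hm, (zero_add m).symm⟩
  refine ⟨fun x hx => even_sum_norm_sq_of_mem_turyn hTstarS hint hTeven hTstareven hx,
    fun x hx => four_le_sum_norm_sq_of_mem_turyn hTS hTstarS hint hTeven hTstareven
      (fun x hxT hxTstar => (hcap x).1 ⟨hxT, hxTstar⟩) hSmin hx,
    exists_mem_turyn_sum_norm_sq_eq_four hSone fun s hs => ((hcap _).2 ⟨s, hs, rfl⟩).1⟩

/-- The Turyn lattice `Γ = {(m+t₁, m+t₂, m+t₃) : m ∈ T*, tᵢ ∈ T, t₁+t₂+t₃ ∈ 2S}` is an even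
lattice of minimum distance `4`, under the stated hypotheses on `T`, `T*` and `S = T + T*`. -/
theorem stmt_9 {n : ℕ}
    (T Tstar S : AddSubgroup (EuclideanSpace ℝ (Fin n)))
    [DiscreteTopology T] [DiscreteTopology Tstar]
    (hS : (S : Set (EuclideanSpace ℝ (Fin n))) =
      {x | ∃ t ∈ T, ∃ m ∈ Tstar, x = t + m})
    (hint : ∀ s ∈ S, ∀ s' ∈ S, ∃ z : ℤ, 2 * (inner ℝ s s' : ℝ) = (z : ℝ))
    (hTeven : ∀ t ∈ T, ∃ z : ℤ, Even z ∧ ‖t‖ ^ 2 = (z : ℝ))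
    (hTstareven : ∀ t ∈ Tstar, ∃ z : ℤ, Even z ∧ ‖t‖ ^ 2 = (z : ℝ))
    (hcap : ∀ x : EuclideanSpace ℝ (Fin n), (x ∈ T ∧ x ∈ Tstar) ↔ ∃ s ∈ S, x = s + s)
    (hSone : ∃ s ∈ S, ‖s‖ ^ 2 = 1)
    (hSmin : ∀ s ∈ S, s ≠ (0 : EuclideanSpace ℝ (Fin n)) → 1 ≤ ‖s‖ ^ 2) :
    (∀ x : Fin 3 → EuclideanSpace ℝ (Fin n),
      (∃ m ∈ Tstar, ∃ t : Fin 3 → EuclideanSpace ℝ (Fin n),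
        (∀ i, t i ∈ T) ∧ (∃ s ∈ S, t 0 + t 1 + t 2 = s + s) ∧ ∀ i, x i = m + t i) →
      ∃ z : ℤ, Even z ∧ (∑ i, ‖x i‖ ^ 2) = (z : ℝ)) ∧
    (∀ x : Fin 3 → EuclideanSpace ℝ (Fin n),
      (∃ m ∈ Tstar, ∃ t : Fin 3 → EuclideanSpace ℝ (Fin n),
        (∀ i, t i ∈ T) ∧ (∃ s ∈ S, t 0 + t 1 + t 2 = s + s) ∧ ∀ i, x i = m + t i) →
      x ≠ 0 → (4 : ℝ) ≤ ∑ i, ‖x i‖ ^ 2) ∧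
    (∃ x : Fin 3 → EuclideanSpace ℝ (Fin n),
      (∃ m ∈ Tstar, ∃ t : Fin 3 → EuclideanSpace ℝ (Fin n),
        (∀ i, t i ∈ T) ∧ (∃ s ∈ S, t 0 + t 1 + t 2 = s + s) ∧ ∀ i, x i = m + t i) ∧
      (∑ i, ‖x i‖ ^ 2) = (4 : ℝ)) :=
  stmt_9_general T Tstar S hS hint hTeven hTstareven hcap hSone hSmin
end

section
/- Let V ⊆ T be additive subgroups of ℝ^n, k ≥ 2, Γ_P = {(t₁,…,t_k) ∈ T^k : t₁ + ⋯ + t_k ∈ V}, y = (y₁,…,y_k) ∈ (ℝ^n)^k and r ≥ 0. Then {x ∈ Γ_P : Σᵢ ‖yᵢ − xᵢ‖² ≤ r} = ⋃_{i=1}^{k} ( {x ∈ Γ_P : Σⱼ ‖yⱼ − xⱼ‖² ≤ r, ‖yⱼ − xⱼ‖² ≤ r/2 for all j ≠ i, and ‖yᵢ − xᵢ‖² ≤ 2r/3} ∪ {x ∈ Γ_P : Σⱼ ‖yⱼ − xⱼ‖² ≤ r, ‖yⱼ − xⱼ‖² ≤ r/3 for all j ≠ i, and ‖yᵢ − xᵢ‖²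 ≤ r} ). Equivalently, for any nonnegative reals d₁,…,d_k with Σᵢ dᵢ ≤ r there exists an index i such that either (dⱼ ≤ r/2 for all j ≠ i and dᵢ ≤ 2r/3) or (dⱼ ≤ r/3 for all j ≠ i and dᵢ ≤ r). -/
lemma scalar_split {k : ℕ} (hk : 2 ≤ k) (r : ℝ)
    (d : Fin k → ℝ) (hd : ∀ i, 0 ≤ d i) (hsum : (∑ i, d i) ≤ r) :
    ∃ i : Fin k,
      ((∀ j, j ≠ i → d j ≤ r / 2) ∧ d i ≤ 2 * r / 3) ∨
      ((∀ j, j ≠ i → d j ≤ r / 3) ∧ d i ≤ r) := by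
  have hkpos : 0 < k := by omega
  have hne : (Finset.univ : Finset (Fin k)).Nonempty := ⟨⟨0, hkpos⟩, Finset.mem_univ _⟩
  obtain ⟨i, -, hi⟩ := Finset.exists_max_image Finset.univ d hne
  refine ⟨i, ?_⟩
  have hpair : ∀ j, j ≠ i → d i + d j ≤ r := by
    intro j hj
    have hsub : ({i, j} : Finset (Fin k)) ⊆ Finset.univ := Finset.subset_univ _
    have := Finset.sum_le_sum_of_subset_of_nonneg hsub (fun a _ _ => hd a)
    rw [Finset.sum_pair (Ne.symm hj)] at this
    linarith
  have hdi : d i ≤ r := by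
    have := Finset.single_le_sum (f := d) (fun a _ => hd a) (Finset.mem_univ i)
    linarith
  by_cases hcase : d i ≤ 2 * r / 3
  · left
    refine ⟨fun j hj => ?_, hcase⟩
    have h1 := hi j (Finset.mem_univ j)
    have h2 := hpair j hj
    linarith
  · right
    refine ⟨fun j hj => ?_, hdi⟩
    have h2 := hpair j hj
    linarith

/-- Correctness of the first splitting strategy for list decoding the single parity-check
lattice, together with its scalar reformulation. -/
theorem stmt_11 {n : ℕ} (k : ℕ) (hk : 2 ≤ k)
    (T V : AddSubgroup (EuclideanSpace ℝ (Fin n))) (hVT : V ≤ T)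
    (y : Fin k → EuclideanSpace ℝ (Fin n)) (r : ℝ) (hr : 0 ≤ r) :
    ({x : Fin k → EuclideanSpace ℝ (Fin n) |
        ((∀ i, x i ∈ T) ∧ (∑ i, x i) ∈ V) ∧ (∑ i, ‖y i - x i‖ ^ 2) ≤ r} =
      ⋃ i : Fin k,
        ({x : Fin k → EuclideanSpace ℝ (Fin n) |
          ((∀ i, x i ∈ T) ∧ (∑ i, x i) ∈ V) ∧ (∑ j, ‖y j - x j‖ ^ 2) ≤ r ∧
            (∀ j, j ≠ i → ‖y j - x j‖ ^ 2 ≤ r / 2) ∧ ‖y i - x i‖ ^ 2 ≤ 2 * r / 3} ∪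
        {x : Fin k → EuclideanSpace ℝ (Fin n) |
          ((∀ i, x i ∈ T) ∧ (∑ i, x i) ∈ V) ∧ (∑ j, ‖y j - x j‖ ^ 2) ≤ r ∧
            (∀ j, j ≠ i → ‖y j - x j‖ ^ 2 ≤ r / 3) ∧ ‖y i - x i‖ ^ 2 ≤ r})) ∧
    (∀ d : Fin k → ℝ, (∀ i, 0 ≤ d i) → (∑ i, d i) ≤ r →
      ∃ i : Fin k,
        ((∀ j, j ≠ i → d j ≤ r / 2) ∧ d i ≤ 2 * r / 3) ∨
        ((∀ j, j ≠ i → d j ≤ r / 3) ∧ d i ≤ r)) := by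
  constructor
  · ext x
    simp only [Set.mem_setOf_eq, Set.mem_iUnion, Set.mem_union]
    constructor
    · rintro ⟨hmem, hsum⟩
      obtain ⟨i, hi⟩ := scalar_split hk r (fun j => ‖y j - x j‖ ^ 2)
        (fun j => by positivity) hsum
      exact ⟨i, hi.imp (fun h => ⟨hmem, hsum, h⟩) (fun h => ⟨hmem, hsum, h⟩)⟩
    · rintro ⟨i, h | h⟩ <;> exact ⟨h.1, h.2.1⟩
  · exact fun d hd hsum => scalar_split hk r d hd hsum
end

section
/- Let Λ be a full-rank lattice in ℝ^n and let R(Λ) = sup_{y ∈ ℝ^n} inf_{x ∈ Λ} ‖y − x‖ be its covering radius. Then: (a) for every v ∈ Λ there exists x ∈ Λ with ‖2x − v‖ ≤ 2R(Λ); equivalently every coset of 2Λ in Λ contains a vector of Euclidean norm at most 2R(Λ); and consequently (b) the number of vectors w ∈ Λ with ‖w‖ ≤ 2R(Λ) is at least 2^n. -/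
/-!
Halving a lattice vector `v` and taking a lattice point `x` within the covering radius `R` of
`v / 2` gives `‖2x - v‖ ≤ 2R`, so every coset of `2Λ` meets the ball of radius `2R`. The
cosets of `2Λ` are `2 ^ n` in number, since `Λ ≅ ℤⁿ` as a group.
-/

open Module

theorem AddSubgroup.index_le_ncard_of_forall_exists_neg_add_mem {G : Type*} [AddGroup G]
    (H : AddSubgroup G) {S : Set G} (hS : S.Finite) (h : ∀ g, ∃ s ∈ S, -s + g ∈ H) :
    H.index ≤ S.ncard := by
  have : Finite S := hS
  rw [AddSubgroup.index, ← Nat.card_coe_set_eq]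
  refine Nat.card_le_card_of_surjective (fun s : S => (s : G ⧸ H)) ?_
  rintro ⟨g⟩
  obtain ⟨s, hs, hsg⟩ := h g
  exact ⟨⟨s, hs⟩, QuotientAddGroup.eq.mpr hsg⟩

namespace ZLattice

variable {E : Type*} [NormedAddCommGroup E] (L : Submodule ℤ E)

/-- For a full lattice the supremum is finite (`bddAbove_range_iInf_norm_sub`); otherwise `⨆`
would return the junk value `0`. -/
noncomputable def coveringRadius : ℝ := ⨆ y : E, ⨅ x : L, ‖y - (x : E)‖

variable [DiscreteTopology L]

theorem isClosed_coe : IsClosed (L : Set E) :=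
  have : DiscreteTopology L.toAddSubgroup := ‹DiscreteTopology L›
  AddSubgroup.isClosed_of_discrete (H := L.toAddSubgroup)

theorem finite_setOf_mem_norm_le [ProperSpace E] (r : ℝ) : {w : E | w ∈ L ∧ ‖w‖ ≤ r}.Finite := by
  have : DiscreteTopology L.toAddSubgroup := ‹DiscreteTopology L›
  refine (Metric.finite_isBounded_inter_isClosed (K := Metric.closedBall (0 : E) r)
    DiscreteTopology.isDiscrete Metric.isBounded_closedBall (isClosed_coe L)).subset ?_
  exact fun w ⟨hw, hwr⟩ => ⟨mem_closedBall_zero_iff.mpr hwr, hw⟩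

variable [NormedSpace ℝ E] [FiniteDimensional ℝ E] [IsZLattice ℝ L]

theorem bddAbove_range_iInf_norm_sub :
    BddAbove (Set.range fun y : E => ⨅ x : L, ‖y - (x : E)‖) := by
  let B := (Free.chooseBasis ℤ L).ofZLatticeBasis ℝ L
  refine ⟨∑ i, ‖B i‖, ?_⟩
  rintro _ ⟨y, rfl⟩
  have hfloor : (ZSpan.floor B y : E) ∈ L :=
    ((Free.chooseBasis ℤ L).ofZLatticeBasis_span ℝ).le (ZSpan.floor B y).2
  calc ⨅ x : L, ‖y - (x : E)‖ ≤ ‖y - ZSpan.floor B y‖ :=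
        ciInf_le ⟨0, by rintro _ ⟨x, rfl⟩; positivity⟩ (⟨_, hfloor⟩ : L)
    _ = ‖ZSpan.fract B y‖ := by rw [ZSpan.fract_apply]
    _ ≤ ∑ i, ‖B i‖ := ZSpan.norm_fract_le B y

theorem exists_mem_norm_sub_le_coveringRadius (y : E) :
    ∃ x ∈ L, ‖y - x‖ ≤ coveringRadius L := by
  obtain ⟨x, hxL, hx⟩ := (isClosed_coe L).exists_infDist_eq_dist ⟨0, L.zero_mem⟩ y
  refine ⟨x, hxL, ?_⟩
  rw [← dist_eq_norm, ← hx, Metric.infDist_eq_iInf]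
  simp_rw [dist_eq_norm]
  exact le_ciSup (bddAbove_range_iInf_norm_sub L) y

theorem exists_mem_norm_smul_sub_le {c : ℝ} (hc : c ≠ 0) (v : E) :
    ∃ x ∈ L, ‖c • x - v‖ ≤ |c| * coveringRadius L := by
  obtain ⟨x, hxL, hx⟩ := exists_mem_norm_sub_le_coveringRadius L (c⁻¹ • v)
  refine ⟨x, hxL, ?_⟩
  calc ‖c • x - v‖ = |c| * ‖c⁻¹ • v - x‖ := by
        rw [← Real.norm_eq_abs, ← norm_smul, norm_sub_rev, smul_sub, smul_inv_smul₀ hc]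
    _ ≤ |c| * coveringRadius L := by gcongr

theorem two_pow_finrank_le_ncard :
    2 ^ finrank ℝ E ≤ {w : E | w ∈ L ∧ ‖w‖ ≤ 2 * coveringRadius L}.ncard := by
  have : Free ℤ L := module_free ℝ L
  have : Module.Finite ℤ L := module_finite ℝ L
  let S : Set L := {z | ‖(z : E)‖ ≤ 2 * coveringRadius L}
  have hS : Subtype.val '' S = {w : E | w ∈ L ∧ ‖w‖ ≤ 2 * coveringRadius L} := by
    ext w; simp [S, and_comm]
  rw [← hS, Set.ncard_image_of_injective _ Subtype.val_injective, ← rank ℝ L,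
    ← AddSubgroup.index_range_nsmul L 2]
  refine AddSubgroup.index_le_ncard_of_forall_exists_neg_add_mem _ ?_ ?_
  · exact Set.Finite.of_finite_image (hS ▸ finite_setOf_mem_norm_le L _)
      Subtype.val_injective.injOn
  · intro v
    obtain ⟨x, hxL, hx⟩ := exists_mem_norm_smul_sub_le L two_ne_zero (v : E)
    refine ⟨v - 2 • ⟨x, hxL⟩, ?_, ⟨⟨x, hxL⟩, ?_⟩⟩
    · simpa [S, two_smul, norm_sub_rev] using hx
    · simp

end ZLattice

/-- Covering radius lemma for the Nebe lattice argument: (a) every coset of `2Λ` in `Λ`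
contains a vector of norm at most `2R(Λ)`; (b) hence there are at least `2^n` vectors of
`Λ` of norm at most `2R(Λ)`. -/
theorem stmt_14 {n : ℕ} (Λ : Submodule ℤ (EuclideanSpace ℝ (Fin n)))
    [DiscreteTopology Λ] [IsZLattice ℝ Λ]
    (R : ℝ)
    (hR : R = ⨆ y : EuclideanSpace ℝ (Fin n), ⨅ x : Λ, ‖y - (x : EuclideanSpace ℝ (Fin n))‖) :
    (∀ v ∈ Λ, ∃ x ∈ Λ, ‖(2 : ℝ) • x - v‖ ≤ 2 * R) ∧
    ({w : EuclideanSpace ℝ (Fin n) | w ∈ Λ ∧ ‖w‖ ≤ 2 * R}.Finite ∧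
      2 ^ n ≤ {w : EuclideanSpace ℝ (Fin n) | w ∈ Λ ∧ ‖w‖ ≤ 2 * R}.ncard) := by
  obtain rfl : R = ZLattice.coveringRadius Λ := hR
  refine ⟨fun v _ => ?_, ZLattice.finite_setOf_mem_norm_le Λ _, ?_⟩
  · simpa using ZLattice.exists_mem_norm_smul_sub_le Λ two_ne_zero v
  · simpa using ZLattice.two_pow_finrank_le_ncard Λ
end

section
/- Let T be a discrete additive subgroup of ℝ^n, V ⊆ T a subgroup containing a nonzero element, and k ≥ 2, and suppose d(V) = 2·d(T), where d(·) is the minimum squared norm over nonzero elements. Let Γ_P = {(t₁,…,t_k) ∈ T^k : t₁ + ⋯ + t_k ∈ V}. Then every x ∈ Γ_P with ‖x‖² = d(V) has one of the following two forms: either exactly one coordinate of x is nonzero, and that coordinate is an element of V of squared norm d(V); or exactly two coordinates of x are nonzero, and they are elements n₁, n₂ ∈ T with ‖n₁‖² = ‖n₂‖² = d(T) and n₁ + n₂ ∈ V. -/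
/-- Structure of the minimal vectors of the single parity-check lattice when
`d(V) = 2·d(T)`: a vector of squared norm `d(V)` has either exactly one nonzero coordinate
(an element of `V` of squared norm `d(V)`), or exactly two nonzero coordinates
(elements `n₁, n₂ ∈ T` of squared norm `d(T)` with `n₁ + n₂ ∈ V`). -/
theorem stmt_15 {n : ℕ} (k : ℕ) (hk : 2 ≤ k)
    (T V : AddSubgroup (EuclideanSpace ℝ (Fin n)))
    [DiscreteTopology T]
    (hVT : V ≤ T)
    (hVne : ∃ v ∈ V, v ≠ (0 : EuclideanSpace ℝ (Fin n)))
    (dV dT : ℝ)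
    (hdV : IsLeast {d : ℝ | ∃ x ∈ V, x ≠ (0 : EuclideanSpace ℝ (Fin n)) ∧ ‖x‖ ^ 2 = d} dV)
    (hdT : IsLeast {d : ℝ | ∃ x ∈ T, x ≠ (0 : EuclideanSpace ℝ (Fin n)) ∧ ‖x‖ ^ 2 = d} dT)
    (hd2 : dV = 2 * dT)
    (x : Fin k → EuclideanSpace ℝ (Fin n))
    (hxT : ∀ i, x i ∈ T) (hxV : (∑ i, x i) ∈ V)
    (hxnorm : (∑ i, ‖x i‖ ^ 2) = dV) :
    (∃ i : Fin k, x i ≠ 0 ∧ x i ∈ V ∧ ‖x i‖ ^ 2 = dV ∧ ∀ j, j ≠ i → x j = 0) ∨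
    (∃ i j : Fin k, i ≠ j ∧ x i ≠ 0 ∧ x j ≠ 0 ∧
      ‖x i‖ ^ 2 = dT ∧ ‖x j‖ ^ 2 = dT ∧ x i + x j ∈ V ∧
      ∀ l, l ≠ i → l ≠ j → x l = 0) := by
  classical
  obtain ⟨⟨t0, ht0T, ht0ne, ht0n⟩, hdTlb⟩ := hdT
  have hdTpos : 0 < dT := ht0n ▸ pow_pos (norm_pos_iff.mpr ht0ne) 2
  have hterm : ∀ i, x i ≠ 0 → dT ≤ ‖x i‖ ^ 2 := fun i hi =>
    hdTlb ⟨x i, hxT i, hi, rfl⟩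
  set s := Finset.univ.filter (fun i => x i ≠ 0) with hs
  have hmem : ∀ i, i ∈ s ↔ x i ≠ 0 := by intro i; simp [hs]
  have hsum_norm : ∑ i ∈ s, ‖x i‖ ^ 2 = dV := by
    rw [← hxnorm]
    symm
    apply (Finset.sum_subset (Finset.subset_univ _) _).symm
    intro i _ hi
    have : x i = 0 := by simpa [hs] using hi
    simp [this]
  have hsum_x : ∑ i ∈ s, x i = ∑ i, x i := by
    apply Finset.sum_subset (Finset.subset_univ _)
    intro i _ hi
    simpa [hs] using hi
  have hcard_le : s.card ≤ 2 := by
    by_contra h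
    push_neg at h
    have hsum_ge : (s.card : ℝ) * dT ≤ ∑ i ∈ s, ‖x i‖ ^ 2 := by
      calc (s.card : ℝ) * dT = ∑ _i ∈ s, dT := by rw [Finset.sum_const, nsmul_eq_mul]
      _ ≤ _ := Finset.sum_le_sum (fun i hi => hterm i ((hmem i).1 hi))
    have h3' : (3 : ℝ) ≤ s.card := by exact_mod_cast h
    nlinarith [hsum_norm]
  have hcard_ge : 1 ≤ s.card := by
    rcases Finset.eq_empty_or_nonempty s with he | hne
    · exfalso
      rw [he, Finset.sum_empty] at hsum_norm
      nlinarith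
    · exact Finset.card_pos.2 hne
  interval_cases h : s.card
  · -- card = 1
    obtain ⟨i, hi⟩ := Finset.card_eq_one.1 h
    have hine : x i ≠ 0 := (hmem i).1 (hi ▸ Finset.mem_singleton_self i)
    have hzero : ∀ j, j ≠ i → x j = 0 := by
      intro j hj
      by_contra hxj
      have : j ∈ s := (hmem j).2 hxj
      rw [hi, Finset.mem_singleton] at this
      exact hj this
    have hsumx : ∑ j, x j = x i := by
      rw [← hsum_x, hi, Finset.sum_singleton]
    have hnrm : ‖x i‖ ^ 2 = dV := by
      rw [← hsum_norm, hi, Finset.sum_singleton]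
    exact Or.inl ⟨i, hine, hsumx ▸ hxV, hnrm, hzero⟩
  · -- card = 2
    obtain ⟨i, j, hij, hs2⟩ := Finset.card_eq_two.1 h
    have hine : x i ≠ 0 := (hmem i).1 (by rw [hs2]; simp)
    have hjne : x j ≠ 0 := (hmem j).1 (by rw [hs2]; simp)
    have hzero : ∀ l, l ≠ i → l ≠ j → x l = 0 := by
      intro l hli hlj
      by_contra hxl
      have : l ∈ s := (hmem l).2 hxl
      rw [hs2, Finset.mem_insert, Finset.mem_singleton] at this
      tauto
    have hpair : ‖x i‖ ^ 2 + ‖x j‖ ^ 2 = 2 * dT := by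
      rw [← hd2, ← hsum_norm, hs2, Finset.sum_pair hij]
    have hi' : dT ≤ ‖x i‖ ^ 2 := hterm i hine
    have hj' : dT ≤ ‖x j‖ ^ 2 := hterm j hjne
    have hieq : ‖x i‖ ^ 2 = dT := by linarith
    have hjeq : ‖x j‖ ^ 2 = dT := by linarith
    have hsumx : ∑ l, x l = x i + x j := by
      rw [← hsum_x, hs2, Finset.sum_pair hij]
    exact Or.inr ⟨i, j, hij, hine, hjne, hieq, hjeq, hsumx ▸ hxV, hzero⟩
end

section
/- Let T be a full-rank lattice in ℝ^n, V ⊆ T a full-rank sublattice, and k ≥ 2, and suppose d(V) = 2·d(T). Let Γ_P = {(t₁,…,t_k) ∈ T^k : t₁ + ⋯ + t_k ∈ V}. Then the kissing number of Γ_P (the number of x ∈ Γ_P with ‖x‖² = d(Γ_P) = d(V)) equals k·τ(V) + (k choose 2)·M, where τ(V) is the number of v ∈ V with ‖v‖² = d(V) and M is the number of ordered pairs (n₁, n₂) ∈ T × T with ‖n₁‖² = ‖n₂‖² = d(T) and n₁ + n₂ ∈ V. -/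
/-!
Write `d = d(T)`. A point `x` of the parity-check lattice with `∑ ‖xᵢ‖² = 2d` has every nonzero
coordinate in `T`, hence of squared norm at least `d`; so at most two coordinates are nonzero.
If only one is, `x` is a minimal vector of `V` placed in one of the `k` positions; if two are, in
positions `i < j`, both have squared norm exactly `d` and their sum lies in `V`. The two families
are disjoint, and the placements are injective since the entries are nonzero, giving
`k·τ(V) + C(k,2)·M`.
-/

open Finset

section PiSingle

variable {ι M : Type*} [AddCommMonoid M]

theorem Pi.single_injOn_snd_ne_zero [DecidableEq ι] :
    Set.InjOn (fun q : ι × M => (Pi.single q.1 q.2 : ι → M)) {q | q.2 ≠ 0} := by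
  rintro ⟨i, v⟩ (hv : v ≠ 0) ⟨i', v'⟩ - h
  have hi := congrFun h i
  have hi' := congrFun h i'
  grind

theorem Pi.single_ne_single_add_single [DecidableEq ι] {i j j' : ι} {v a b : M} (hjj' : j ≠ j')
    (ha : a ≠ 0) (hb : b ≠ 0) :
    (Pi.single i v : ι → M) ≠ Pi.single j a + Pi.single j' b := by
  intro h
  have hj := congrFun h j
  have hj' := congrFun h j'
  grind [Pi.add_apply]

theorem Pi.single_add_single_injOn [LinearOrder ι] :
    Set.InjOn (fun q : (ι × ι) × (M × M) => (Pi.single q.1.1 q.2.1 + Pi.single q.1.2 q.2.2 : ι → M))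
      {q | q.1.1 < q.1.2 ∧ q.2.1 ≠ 0 ∧ q.2.2 ≠ 0} := by
  rintro ⟨⟨i, j⟩, ⟨a, b⟩⟩ ⟨hij, ha, hb⟩ ⟨⟨i', j'⟩, ⟨a', b'⟩⟩ ⟨hij', ha', hb'⟩ h
  have hi := congrFun h i
  have hj := congrFun h j
  have hi' := congrFun h i'
  have hj' := congrFun h j'
  grind [Pi.add_apply]

theorem Set.ncard_setOf_fst_lt_snd [Fintype ι] [LinearOrder ι] :
    {p : ι × ι | p.1 < p.2}.ncard = (Fintype.card ι).choose 2 := by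
  rw [← Fintype.card_product_filter_lt, ← Set.ncard_coe_finset]
  simp

end PiSingle

theorem AddSubgroup.finite_setOf_mem_norm_sq_eq {E : Type*} [NormedAddCommGroup E] [ProperSpace E]
    (L : AddSubgroup E) [DiscreteTopology L] (r : ℝ) : {x | x ∈ L ∧ ‖x‖ ^ 2 = r}.Finite := by
  refine (Metric.finite_isBounded_inter_isClosed DiscreteTopology.isDiscrete
    (Metric.isBounded_closedBall (x := 0) (r := √r)) L.isClosed_of_discrete).subset ?_
  rintro x ⟨hx, rfl⟩
  exact ⟨by simp, hx⟩

section ParityCheckSphere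

variable {ι E : Type*} [SeminormedAddCommGroup E]

theorem exists_eq_single_or_eq_single_add_single [Fintype ι] [LinearOrder ι] {x : ι → E} {d : ℝ}
    (hd : 0 < d) (hmin : ∀ i, x i ≠ 0 → d ≤ ‖x i‖ ^ 2) (hsum : ∑ i, ‖x i‖ ^ 2 = 2 * d) :
    (∃ i v, x = Pi.single i v) ∨
      ∃ i j a b, i < j ∧ ‖a‖ ^ 2 = d ∧ ‖b‖ ^ 2 = d ∧ x = Pi.single i a + Pi.single j b := by
  classical
  have hxF : ∑ i with x i ≠ 0, Pi.single i (x i) = x := by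
    rw [sum_filter_of_ne (p := (x · ≠ 0)) fun i _ h hxi => h (by simp [hxi]), univ_sum_single]
  have hsumF : ∑ i with x i ≠ 0, ‖x i‖ ^ 2 = 2 * d := by
    rw [sum_filter_of_ne (p := (x · ≠ 0)) fun i _ h hxi => h (by simp [hxi]), hsum]
  set F : Finset ι := {i | x i ≠ 0}
  have hminF : ∀ i ∈ F, d ≤ ‖x i‖ ^ 2 := fun i hi => hmin i (mem_filter.1 hi).2
  have hcard : #F ≤ 2 := by
    have := hsumF ▸ card_nsmul_le_sum F _ d hminF
    rw [nsmul_eq_mul] at this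
    exact_mod_cast le_of_mul_le_mul_right this hd
  have hF : F.Nonempty := nonempty_of_sum_ne_zero (by rw [hsumF]; positivity)
  obtain hF1 | hF2 : #F = 1 ∨ #F = 2 := by have := hF.card_pos; omega
  · obtain ⟨i, hi⟩ := card_eq_one.1 hF1
    rw [hi, sum_singleton] at hxF
    exact Or.inl ⟨i, x i, hxF.symm⟩
  · obtain ⟨i, j, hij, hF⟩ := card_eq_two.1 hF2
    have hi := hminF i (by simp [hF])
    have hj := hminF j (by simp [hF])
    rw [hF, sum_pair hij] at hxF hsumF
    right
    rcases hij.lt_or_gt with hlt | hlt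
    · exact ⟨i, j, x i, x j, hlt, by linarith, by linarith, hxF.symm⟩
    · exact ⟨j, i, x j, x i, hlt, by linarith, by linarith, by rw [add_comm]; exact hxF.symm⟩

def parityCheckSphere (T V : Set E) (ι : Type*) [Fintype ι] (r : ℝ) : Set (ι → E) :=
  {x | ((∀ i, x i ∈ T) ∧ ∑ i, x i ∈ V) ∧ ∑ i, ‖x i‖ ^ 2 = r}

variable {T V : Set E} {r d : ℝ}

theorem single_mem_parityCheckSphere_iff [Fintype ι] [DecidableEq ι] (hT0 : 0 ∈ T) {i : ι} {v : E} :
    Pi.single i v ∈ parityCheckSphere T V ι r ↔ (v ∈ T ∧ v ∈ V) ∧ ‖v‖ ^ 2 = r := by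
  have hT : (∀ m, (Pi.single i v : ι → E) m ∈ T) ↔ v ∈ T := by
    refine ⟨fun h => by simpa using h i, fun hv m => ?_⟩
    rcases eq_or_ne m i with rfl | h <;> simp [*]
  have hnorm : ∑ m, ‖(Pi.single i v : ι → E) m‖ ^ 2 = ‖v‖ ^ 2 := by
    rw [Fintype.sum_eq_single i fun m hm => by simp [hm]]
    simp
  simp only [parityCheckSphere, Set.mem_ofPred_eq, hT, hnorm, Fintype.sum_pi_single']

theorem single_add_single_mem_parityCheckSphere_iff [Fintype ι] [DecidableEq ι] (hT0 : 0 ∈ T)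
    {i j : ι} (hij : i ≠ j) {a b : E} :
    Pi.single i a + Pi.single j b ∈ parityCheckSphere T V ι r ↔
      ((a ∈ T ∧ b ∈ T) ∧ a + b ∈ V) ∧ ‖a‖ ^ 2 + ‖b‖ ^ 2 = r := by
  have hT : (∀ m, (Pi.single i a + Pi.single j b : ι → E) m ∈ T) ↔ a ∈ T ∧ b ∈ T := by
    refine ⟨fun h => ⟨by simpa [hij.symm] using h i, by simpa [hij] using h j⟩,
      fun ⟨ha, hb⟩ m => ?_⟩
    rcases eq_or_ne m i with rfl | hi
    · simpa [hij]
    rcases eq_or_ne m j with rfl | hj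
    · simpa [hi]
    · simpa [hi, hj]
  have hsum : ∑ m, (Pi.single i a + Pi.single j b : ι → E) m = a + b := by
    simp [sum_add_distrib]
  have hnorm : ∑ m, ‖(Pi.single i a + Pi.single j b : ι → E) m‖ ^ 2 = ‖a‖ ^ 2 + ‖b‖ ^ 2 := by
    rw [Fintype.sum_eq_add i j hij fun m hm => by simp [hm.1, hm.2]]
    simp [hij, hij.symm]
  simp only [parityCheckSphere, Set.mem_ofPred_eq, hT, hsum, hnorm]

variable [Fintype ι] [LinearOrder ι]

theorem parityCheckSphere_eq_union (hT0 : 0 ∈ T) (hVT : V ⊆ T) (hd : 0 < d)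
    (hmin : ∀ t ∈ T, t ≠ 0 → d ≤ ‖t‖ ^ 2) :
    parityCheckSphere T V ι (2 * d) =
      (fun q : ι × E => Pi.single q.1 q.2) '' (Set.univ ×ˢ {v | v ∈ V ∧ ‖v‖ ^ 2 = 2 * d}) ∪
        (fun q : (ι × ι) × (E × E) => Pi.single q.1.1 q.2.1 + Pi.single q.1.2 q.2.2) ''
          ({p | p.1 < p.2} ×ˢ
            {p | p.1 ∈ T ∧ p.2 ∈ T ∧ ‖p.1‖ ^ 2 = d ∧ ‖p.2‖ ^ 2 = d ∧ p.1 + p.2 ∈ V}) := by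
  refine Set.Subset.antisymm (fun x hx => ?_) ?_
  · rcases exists_eq_single_or_eq_single_add_single hd (fun i => hmin _ (hx.1.1 i)) hx.2 with
      ⟨i, v, rfl⟩ | ⟨i, j, a, b, hij, ha, hb, rfl⟩
    · obtain ⟨⟨-, hv⟩, hvn⟩ := (single_mem_parityCheckSphere_iff hT0).1 hx
      exact Or.inl ⟨(i, v), ⟨trivial, hv, hvn⟩, rfl⟩
    · obtain ⟨⟨⟨haT, hbT⟩, hab⟩, -⟩ := (single_add_single_mem_parityCheckSphere_iff hT0 hij.ne).1 hx
      exact Or.inr ⟨((i, j), (a, b)), ⟨hij, haT, hbT, ha, hb, hab⟩, rfl⟩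
  · rintro _ (⟨⟨i, v⟩, ⟨-, hv, hvn⟩, rfl⟩ | ⟨⟨⟨i, j⟩, a, b⟩, ⟨hij, haT, hbT, ha, hb, hab⟩, rfl⟩)
    · exact (single_mem_parityCheckSphere_iff hT0).2 ⟨⟨hVT hv, hv⟩, hvn⟩
    · exact (single_add_single_mem_parityCheckSphere_iff hT0 hij.ne).2
        ⟨⟨⟨haT, hbT⟩, hab⟩, by rw [ha, hb, two_mul]⟩

theorem ncard_parityCheckSphere (hT0 : 0 ∈ T) (hVT : V ⊆ T) (hd : 0 < d)
    (hmin : ∀ t ∈ T, t ≠ 0 → d ≤ ‖t‖ ^ 2) (hfin : ∀ r, {t | t ∈ T ∧ ‖t‖ ^ 2 = r}.Finite) :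
    (parityCheckSphere T V ι (2 * d)).ncard =
      Fintype.card ι * {v | v ∈ V ∧ ‖v‖ ^ 2 = 2 * d}.ncard +
        (Fintype.card ι).choose 2 *
          {p : E × E | p.1 ∈ T ∧ p.2 ∈ T ∧ ‖p.1‖ ^ 2 = d ∧ ‖p.2‖ ^ 2 = d ∧
            p.1 + p.2 ∈ V}.ncard := by
  have hne : ∀ {v : E} {r : ℝ}, 0 < r → ‖v‖ ^ 2 = r → v ≠ 0 := by
    rintro v r hr rfl rfl
    simp at hr
  rw [parityCheckSphere_eq_union hT0 hVT hd hmin]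
  set A := {v | v ∈ V ∧ ‖v‖ ^ 2 = 2 * d}
  set P := {p : E × E | p.1 ∈ T ∧ p.2 ∈ T ∧ ‖p.1‖ ^ 2 = d ∧ ‖p.2‖ ^ 2 = d ∧ p.1 + p.2 ∈ V}
  have hfinA : A.Finite := (hfin _).subset fun v hv => ⟨hVT hv.1, hv.2⟩
  have hfinP : P.Finite :=
    ((hfin d).prod (hfin d)).subset fun p hp => ⟨⟨hp.1, hp.2.2.1⟩, ⟨hp.2.1, hp.2.2.2.1⟩⟩
  have hinjA : Set.InjOn (fun q : ι × E => (Pi.single q.1 q.2 : ι → E)) (Set.univ ×ˢ A) :=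
    Pi.single_injOn_snd_ne_zero.mono fun q hq => hne (by positivity) hq.2.2
  have hinjP : Set.InjOn
      (fun q : (ι × ι) × (E × E) => (Pi.single q.1.1 q.2.1 + Pi.single q.1.2 q.2.2 : ι → E))
      ({p | p.1 < p.2} ×ˢ P) :=
    Pi.single_add_single_injOn.mono fun _ hq => by
      obtain ⟨hlt, -, -, ha, hb, -⟩ := hq
      exact ⟨hlt, hne hd ha, hne hd hb⟩
  rw [Set.ncard_union_eq ?_ ((Set.finite_univ.prod hfinA).image _)
      (((Set.toFinite _).prod hfinP).image _),
    hinjA.ncard_image, hinjP.ncard_image, Set.ncard_prod, Set.ncard_prod, Set.ncard_univ,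
    Nat.card_eq_fintype_card, Set.ncard_setOf_fst_lt_snd]
  rw [Set.disjoint_left]
  rintro _ ⟨⟨i, v⟩, -, rfl⟩ ⟨⟨⟨j, j'⟩, a, b⟩, ⟨hjj', -, -, ha, hb, -⟩, h⟩
  exact Pi.single_ne_single_add_single hjj'.ne (hne hd ha) (hne hd hb) h.symm

end ParityCheckSphere

theorem stmt_16_general {n : ℕ} (k : ℕ)
    (T V : Submodule ℤ (EuclideanSpace ℝ (Fin n)))
    [DiscreteTopology T]
    (hVT : V ≤ T)
    (dV dT : ℝ)
    (hdT : IsLeast {d : ℝ | ∃ x ∈ T, x ≠ (0 : EuclideanSpace ℝ (Fin n)) ∧ ‖x‖ ^ 2 = d} dT)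
    (hd2 : dV = 2 * dT) :
    {x : Fin k → EuclideanSpace ℝ (Fin n) |
        ((∀ i, x i ∈ T) ∧ (∑ i, x i) ∈ V) ∧ (∑ i, ‖x i‖ ^ 2) = dV}.ncard =
      k * {v : EuclideanSpace ℝ (Fin n) | v ∈ V ∧ ‖v‖ ^ 2 = dV}.ncard +
        k.choose 2 *
          {p : EuclideanSpace ℝ (Fin n) × EuclideanSpace ℝ (Fin n) |
            p.1 ∈ T ∧ p.2 ∈ T ∧ ‖p.1‖ ^ 2 = dT ∧ ‖p.2‖ ^ 2 = dT ∧
              p.1 + p.2 ∈ V}.ncard := by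
  obtain ⟨⟨t, -, ht0, rfl⟩, hmin⟩ := hdT
  have : DiscreteTopology T.toAddSubgroup := ‹DiscreteTopology T›
  have key := ncard_parityCheckSphere (ι := Fin k) (T := T) (V := V) T.zero_mem hVT
    (by positivity) (fun t ht h => hmin ⟨t, ht, h, rfl⟩)
    T.toAddSubgroup.finite_setOf_mem_norm_sq_eq
  rw [Fintype.card_fin, ← hd2] at key
  exact key

/-- Kissing number of the single parity-check lattice when `d(V) = 2·d(T)`:
`τ(Γ_P) = k·τ(V) + C(k,2)·M`, where `M` counts ordered pairs of minimal vectors of `T`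
summing into `V`. -/
theorem stmt_16 {n : ℕ} (k : ℕ) (hk : 2 ≤ k)
    (T V : Submodule ℤ (EuclideanSpace ℝ (Fin n)))
    [DiscreteTopology T] [IsZLattice ℝ T]
    [DiscreteTopology V] [IsZLattice ℝ V]
    (hVT : V ≤ T)
    (dV dT : ℝ)
    (hdV : IsLeast {d : ℝ | ∃ x ∈ V, x ≠ (0 : EuclideanSpace ℝ (Fin n)) ∧ ‖x‖ ^ 2 = d} dV)
    (hdT : IsLeast {d : ℝ | ∃ x ∈ T, x ≠ (0 : EuclideanSpace ℝ (Fin n)) ∧ ‖x‖ ^ 2 = d} dT)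
    (hd2 : dV = 2 * dT) :
    {x : Fin k → EuclideanSpace ℝ (Fin n) |
        ((∀ i, x i ∈ T) ∧ (∑ i, x i) ∈ V) ∧ (∑ i, ‖x i‖ ^ 2) = dV}.ncard =
      k * {v : EuclideanSpace ℝ (Fin n) | v ∈ V ∧ ‖v‖ ^ 2 = dV}.ncard +
        k.choose 2 *
          {p : EuclideanSpace ℝ (Fin n) × EuclideanSpace ℝ (Fin n) |
            p.1 ∈ T ∧ p.2 ∈ T ∧ ‖p.1‖ ^ 2 = dT ∧ ‖p.2‖ ^ 2 = dT ∧
              p.1 + p.2 ∈ V}.ncard :=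
  stmt_16_general k T V hVT dV dT hdT hd2
end

section
/- Let T be a full-rank lattice in ℝ^n containing a nonzero element, and let R : ℝ^n → ℝ^n be a linear map satisfying ⟨Rx, Ry⟩ = 2⟨x, y⟩ for all x, y ∈ ℝ^n (i.e., R·Rᵀ = 2·I) and R(T) ⊆ T. Set V = R(T) and, for k ≥ 2, let Γ_P = {(t₁,…,t_k) ∈ T^k : t₁ + ⋯ + t_k ∈ V}. Then: d(V) = 2·d(T); vol(V) = 2^{n/2}·vol(T); d(Γ_P) = 2·d(T); vol(Γ_P) = 2^{n/2}·vol(T)^k; and the fundamental coding gain satisfies γ(Γ_P) = 2^{(k−1)/k}·γ(T). -/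
/-!
`R` scales squared norms by `2`, so it carries the nonzero vectors of `T` onto those of
`V = R(T)` with squared norms doubled, and `|det R| = 2^(n/2)` because `Rᵀ R = 2`.
For `Γ_P`, the shear replacing one coordinate by the sum of all coordinates is unipotent, hence
volume preserving, and maps `Γ_P` onto `V × T^(k-1)`, which gives the covolume. A nonzero vector of
`Γ_P` with two nonzero coordinates has squared norm at least `2 d(T)`; with only one, that
coordinate is the sum, hence lies in `V`. The coding gain is then arithmetic.
-/

open MeasureTheory Module Submodule

theorem IsLeast.sq_norm_image {E F : Type*} [NormedAddCommGroup E]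
    [NormedAddCommGroup F] {S : Set E} {f : E → F} {c d : ℝ} (hc : 0 < c)
    (hf : ∀ x, ‖f x‖ ^ 2 = c * ‖x‖ ^ 2)
    (h : IsLeast {r | ∃ x ∈ S, x ≠ 0 ∧ ‖x‖ ^ 2 = r} d) :
    IsLeast {r | ∃ y ∈ f '' S, y ≠ 0 ∧ ‖y‖ ^ 2 = r} (c * d) := by
  have hne : ∀ x, f x ≠ 0 ↔ x ≠ 0 := fun x => by
    simp only [ne_eq, ← norm_eq_zero (a := f x), ← norm_eq_zero (a := x),
      ← sq_eq_zero_iff (a := ‖f x‖), hf, mul_eq_zero, hc.ne', false_or, sq_eq_zero_iff]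
  obtain ⟨⟨x, hxS, hx0, rfl⟩, hmin⟩ := h
  refine ⟨⟨f x, ⟨x, hxS, rfl⟩, (hne x).mpr hx0, hf x⟩, ?_⟩
  rintro _ ⟨_, ⟨x', hx'S, rfl⟩, hy0, rfl⟩
  rw [hf]
  exact mul_le_mul_of_nonneg_left (hmin ⟨x', hx'S, (hne x').mp hy0, rfl⟩) hc.le

section Similitude

variable {E : Type*} [NormedAddCommGroup E] [InnerProductSpace ℝ E] {c : ℝ} {R : E →ₗ[ℝ] E}

theorem LinearMap.norm_map_sq_of_inner_map_map
    (hR : ∀ x y, inner ℝ (R x) (R y) = c * inner ℝ x y) (x : E) : ‖R x‖ ^ 2 = c * ‖x‖ ^ 2 := by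
  simpa only [← real_inner_self_eq_norm_sq] using hR x x

theorem LinearMap.injective_of_inner_map_map (hc : c ≠ 0)
    (hR : ∀ x y, inner ℝ (R x) (R y) = c * inner ℝ x y) : Function.Injective R := by
  refine (injective_iff_map_eq_zero R).mpr fun x hx => ?_
  have := R.norm_map_sq_of_inner_map_map hR x
  simpa [hx, hc, eq_comm] using this

theorem LinearMap.abs_det_of_inner_map_map [FiniteDimensional ℝ E] (hc : 0 ≤ c)
    (hR : ∀ x y, inner ℝ (R x) (R y) = c * inner ℝ x y) :
    |LinearMap.det R| = c ^ ((finrank ℝ E : ℝ) / 2) := by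
  have hadj : R.adjoint ∘ₗ R = c • LinearMap.id := by
    ext x
    refine ext_inner_left ℝ fun y => ?_
    simp [LinearMap.adjoint_inner_right, hR, inner_smul_right]
  have hsq : R.normDet ^ 2 = c ^ finrank ℝ E := by
    simpa [hadj] using R.normDet_sq
  rw [← R.normDet_eq_abs_det, ← Real.sqrt_sq R.normDet_nonneg, hsq, Real.sqrt_eq_rpow,
    ← Real.rpow_natCast, ← Real.rpow_mul hc]
  ring_nf

end Similitude

theorem ZLattice.covolume_comap_eq_abs_det_mul {E : Type*} [NormedAddCommGroup E]
    [NormedSpace ℝ E] [FiniteDimensional ℝ E] [MeasurableSpace E] [BorelSpace E]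
    (μ : Measure E) [μ.IsAddHaarMeasure] (L : Submodule ℤ E) [DiscreteTopology L]
    [IsZLattice ℝ L] (e : E ≃L[ℝ] E) :
    covolume (ZLattice.comap ℝ L e.toLinearMap) μ =
      |LinearMap.det (e.symm : E →ₗ[ℝ] E)| * covolume L μ := by
  let b := Free.chooseBasis ℤ L
  rw [covolume_eq_measure_fundamentalDomain _ _ (isAddFundamentalDomain b μ),
    covolume_eq_measure_fundamentalDomain _ _
      (isAddFundamentalDomain (b.ofZLatticeComap ℝ L e.toLinearEquiv) μ),
    Basis.ofZLatticeBasis_comap, ← ZSpan.map_fundamentalDomain]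
  simp [measureReal_def]

theorem ZLattice.mem_comap_symm_iff {E : Type*} [NormedAddCommGroup E] [NormedSpace ℝ E]
    (L : Submodule ℤ E) (e : E ≃L[ℝ] E) {x : E} :
    x ∈ ZLattice.comap ℝ L e.symm.toLinearMap ↔ ∃ t ∈ L, e t = x := by
  rw [← SetLike.mem_coe, ZLattice.coe_comap]
  exact ⟨fun hx => ⟨e.symm x, hx, e.apply_symm_apply x⟩, by rintro ⟨t, ht, rfl⟩; simpa using ht⟩

theorem ZLattice.covolume_comap_symm_of_inner_map_map {E : Type*} [NormedAddCommGroup E]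
    [InnerProductSpace ℝ E] [FiniteDimensional ℝ E] [MeasurableSpace E] [BorelSpace E]
    (μ : Measure E) [μ.IsAddHaarMeasure] (L : Submodule ℤ E) [DiscreteTopology L]
    [IsZLattice ℝ L] {c : ℝ} (hc : 0 ≤ c) (e : E ≃L[ℝ] E)
    (he : ∀ x y, inner ℝ (e x) (e y) = c * inner ℝ x y) :
    covolume (ZLattice.comap ℝ L e.symm.toLinearMap) μ =
      c ^ ((finrank ℝ E : ℝ) / 2) * covolume L μ := by
  rw [covolume_comap_eq_abs_det_mul, ContinuousLinearEquiv.symm_symm,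
    LinearMap.abs_det_of_inner_map_map hc he]

section Pi

variable {ι : Type*} [Fintype ι] {E : ι → Type*} [∀ i, NormedAddCommGroup (E i)]
  [∀ i, NormedSpace ℝ (E i)]

theorem Pi.span_int_range_basis {η : ι → Type*} (c : ∀ i, Basis (η i) ℝ (E i)) :
    span ℤ (Set.range (Pi.basis c)) = pi Set.univ fun i => span ℤ (Set.range (c i)) := by
  ext x
  simp [Basis.mem_span_iff_repr_mem, Pi.basis_repr, Sigma.forall]

theorem ZSpan.fundamentalDomain_pi_basis {η : ι → Type*} [∀ i, Fintype (η i)]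
    (c : ∀ i, Basis (η i) ℝ (E i)) :
    ZSpan.fundamentalDomain (Pi.basis c) = Set.univ.pi fun i => ZSpan.fundamentalDomain (c i) := by
  ext x
  simp [ZSpan.mem_fundamentalDomain, Pi.basis_repr, Sigma.forall]

theorem ZLattice.covolume_eq_of_span_eq {F η : Type*} [NormedAddCommGroup F] [NormedSpace ℝ F]
    [FiniteDimensional ℝ F] [MeasurableSpace F] [BorelSpace F] [Finite η] (μ : Measure F)
    [μ.IsAddHaarMeasure] {L : Submodule ℤ F} [DiscreteTopology L] [IsZLattice ℝ L] (b : Basis η ℝ F)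
    (h : span ℤ (Set.range b) = L) : covolume L μ = μ.real (ZSpan.fundamentalDomain b) := by
  subst h
  exact covolume_eq_measure_fundamentalDomain _ _ (ZSpan.isAddFundamentalDomain b μ)

variable [∀ i, FiniteDimensional ℝ (E i)] (L : ∀ i, Submodule ℤ (E i))
  [∀ i, DiscreteTopology (L i)] [∀ i, IsZLattice ℝ (L i)]

theorem ZLattice.pi_eq_span_range_piBasis :
    pi Set.univ L = span ℤ (Set.range (Pi.basis fun i =>
      (Free.chooseBasis ℤ (L i)).ofZLatticeBasis ℝ (L i))) := by
  simp [Pi.span_int_range_basis, Basis.ofZLatticeBasis_span]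

instance : DiscreteTopology (pi Set.univ L) := by
  rw [ZLattice.pi_eq_span_range_piBasis]
  infer_instance

instance : IsZLattice ℝ (pi Set.univ L) where
  span_top := by
    rw [ZLattice.pi_eq_span_range_piBasis]
    exact IsZLattice.span_top

theorem ZLattice.covolume_pi [∀ i, MeasureSpace (E i)] [∀ i, BorelSpace (E i)]
    [∀ i, (volume : Measure (E i)).IsAddHaarMeasure] :
    covolume (pi Set.univ L) = ∏ i, covolume (L i) := by
  rw [ZLattice.covolume_eq_of_span_eq _ _ (ZLattice.pi_eq_span_range_piBasis L).symm,
    ZSpan.fundamentalDomain_pi_basis, measureReal_def, volume_pi_pi, ENNReal.toReal_prod]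
  refine Finset.prod_congr rfl fun i _ => ?_
  rw [covolume_eq_measure_fundamentalDomain _ _
    (ZLattice.isAddFundamentalDomain (Free.chooseBasis ℤ (L i)) _), measureReal_def]

end Pi

theorem LinearMap.det_one_add_of_isNilpotent {A M : Type*} [CommRing A] [IsDomain A]
    [AddCommGroup M] [Module A M] [Module.Free A M] [Module.Finite A M] {f : M →ₗ[A] M}
    (hf : IsNilpotent f) :
    LinearMap.det (1 + f) = 1 := by
  have := congrArg (Polynomial.eval 1) hf.neg.charpoly_eq_X_pow_finrank
  rwa [LinearMap.eval_charpoly, Polynomial.eval_pow, Polynomial.eval_X, one_pow, map_one,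
    sub_neg_eq_add] at this

section Parity

variable {ι E : Type*} [Fintype ι]

/-- The single parity-check lattice `Γ(V, T, |ι|)_P`. -/
def parityLattice [AddCommGroup E] (V T : Submodule ℤ E) (ι : Type*) [Fintype ι] :
    Submodule ℤ (ι → E) :=
  pi Set.univ (fun _ => T) ⊓ V.comap (∑ i, LinearMap.proj i)

theorem mem_parityLattice [AddCommGroup E] {V T : Submodule ℤ E} {x : ι → E} :
    x ∈ parityLattice V T ι ↔ (∀ i, x i ∈ T) ∧ ∑ i, x i ∈ V := by
  simp [parityLattice]

theorem isLeast_parityLattice [Nonempty ι] [NormedAddCommGroup E] {V T : Submodule ℤ E}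
    (hVT : V ≤ T) {dT dV : ℝ} (hT : dT ∈ lowerBounds {r | ∃ x ∈ T, x ≠ 0 ∧ ‖x‖ ^ 2 = r})
    (hV : IsLeast {r | ∃ x ∈ V, x ≠ 0 ∧ ‖x‖ ^ 2 = r} dV) (h : dV ≤ 2 * dT) :
    IsLeast {r | ∃ x ∈ parityLattice V T ι, x ≠ 0 ∧ ∑ i, ‖x i‖ ^ 2 = r} dV := by
  classical
  obtain ⟨⟨v, hvV, hv0, rfl⟩, hVmin⟩ := hV
  obtain ⟨i₀⟩ := ‹Nonempty ι›
  refine ⟨⟨Pi.single i₀ v, mem_parityLattice.mpr ⟨fun i => ?_, by simpa⟩, by simpa, ?_⟩, ?_⟩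
  · rcases eq_or_ne i i₀ with rfl | hi
    · simpa using hVT hvV
    · simp [hi]
  · rw [Finset.sum_eq_single i₀ (fun i _ hi => by simp [hi]) (by simp), Pi.single_eq_same]
  rintro _ ⟨x, hx, hx0, rfl⟩
  obtain ⟨hxT, hxV⟩ := mem_parityLattice.mp hx
  obtain ⟨j, hj⟩ : ∃ j, x j ≠ 0 := Function.ne_iff.mp hx0
  by_cases hsupp : ∃ j' ≠ j, x j' ≠ 0
  · obtain ⟨j', hj'j, hj'⟩ := hsupp
    calc ‖v‖ ^ 2 ≤ 2 * dT := h
      _ ≤ ‖x j‖ ^ 2 + ‖x j'‖ ^ 2 := by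
        linarith [hT ⟨x j, hxT j, hj, rfl⟩, hT ⟨x j', hxT j', hj', rfl⟩]
      _ = ∑ i ∈ {j, j'}, ‖x i‖ ^ 2 := (Finset.sum_pair (f := fun i => ‖x i‖ ^ 2) hj'j.symm).symm
      _ ≤ ∑ i, ‖x i‖ ^ 2 :=
        Finset.sum_le_sum_of_subset_of_nonneg (Finset.subset_univ _) fun _ _ _ => sq_nonneg _
  · push Not at hsupp
    have hsum : ∑ i, x i = x j := Finset.sum_eq_single j (fun i _ hi => hsupp i hi) (by simp)
    rw [Finset.sum_eq_single j (fun i _ hi => by simp [hsupp i hi]) (by simp)]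
    exact hVmin ⟨x j, hsum ▸ hxV, hj, rfl⟩

section Shear

variable [DecidableEq ι] {A : Type*} [CommRing A] [AddCommGroup E] [Module A E]

variable (A) in
def parityShearNil (i₀ : ι) : (ι → E) →ₗ[A] (ι → E) :=
  LinearMap.single A (fun _ => E) i₀ ∘ₗ ∑ j ∈ Finset.univ.erase i₀, LinearMap.proj j

theorem parityShearNil_apply (i₀ : ι) (x : ι → E) :
    parityShearNil A i₀ x = Pi.single i₀ (∑ j ∈ Finset.univ.erase i₀, x j) := by
  simp [parityShearNil]

theorem parityShearNil_mul_self (i₀ : ι) :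
    parityShearNil A (E := E) i₀ * parityShearNil A i₀ = 0 := by
  refine LinearMap.ext fun x => ?_
  rw [Module.End.mul_apply, parityShearNil_apply, parityShearNil_apply,
    Finset.sum_eq_zero fun j hj => Pi.single_eq_of_ne (Finset.ne_of_mem_erase hj) _,
    Pi.single_zero, LinearMap.zero_apply]

theorem det_one_add_parityShearNil [IsDomain A] [Module.Free A E] [Module.Finite A E] (i₀ : ι) :
    LinearMap.det (1 + parityShearNil A (E := E) i₀) = 1 :=
  LinearMap.det_one_add_of_isNilpotent ⟨2, by rw [sq, parityShearNil_mul_self]⟩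

end Shear

variable [DecidableEq ι] [NormedAddCommGroup E] [NormedSpace ℝ E] [FiniteDimensional ℝ E]

noncomputable def parityShear (i₀ : ι) : (ι → E) ≃L[ℝ] (ι → E) :=
  ((1 + parityShearNil ℝ i₀).equivOfDetNeZero
    (by rw [det_one_add_parityShearNil]; exact one_ne_zero)).toContinuousLinearEquiv

theorem parityShear_apply (i₀ i : ι) (x : ι → E) :
    parityShear i₀ x i = if i = i₀ then ∑ j, x j else x i := by
  change (x + parityShearNil ℝ i₀ x) i = _
  rw [parityShearNil_apply, Pi.add_apply, Pi.single_apply]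
  split_ifs with hi
  · rw [hi, Finset.add_sum_erase _ _ (Finset.mem_univ _)]
  · rw [add_zero]

theorem det_parityShear_symm (i₀ : ι) :
    LinearMap.det ((parityShear (E := E) i₀).symm : (ι → E) →ₗ[ℝ] (ι → E)) = 1 := by
  change LinearMap.det (parityShear (E := E) i₀).toLinearEquiv.symm.toLinearMap = 1
  rw [LinearEquiv.det_coe_symm]
  change (LinearMap.det (1 + parityShearNil ℝ (E := E) i₀))⁻¹ = 1
  rw [det_one_add_parityShearNil, inv_one]

theorem parityLattice_eq_comap {V T : Submodule ℤ E} (hVT : V ≤ T) (i₀ : ι) :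
    parityLattice V T ι =
      ZLattice.comap ℝ (pi Set.univ (Function.update (fun _ => T) i₀ V))
        (parityShear i₀).toLinearMap := by
  ext x
  rw [mem_parityLattice, ZLattice.comap, mem_comap, mem_pi]
  simp only [Set.mem_univ, true_implies, LinearMap.coe_restrictScalars, LinearEquiv.coe_coe,
    ContinuousLinearEquiv.coe_toLinearEquiv, parityShear_apply]
  constructor
  · rintro ⟨hxT, hxV⟩ i
    rcases eq_or_ne i i₀ with rfl | hi
    · simpa using hxV
    · simpa [hi] using hxT i
  · intro h
    have hxV : ∑ j, x j ∈ V := by simpa using h i₀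
    have hxT : ∀ i ≠ i₀, x i ∈ T := fun i hi => by simpa [hi] using h i
    refine ⟨fun i => ?_, hxV⟩
    rcases eq_or_ne i i₀ with rfl | hi
    · rw [eq_sub_of_add_eq (Finset.add_sum_erase _ x (Finset.mem_univ i))]
      exact T.sub_mem (hVT hxV) (T.sum_mem fun j hj => hxT j (Finset.ne_of_mem_erase hj))
    · exact hxT i hi

theorem ZLattice.covolume_parityLattice [Nonempty ι] [MeasureSpace E] [BorelSpace E]
    [(volume : Measure E).IsAddHaarMeasure] {V T : Submodule ℤ E} [DiscreteTopology V]
    [IsZLattice ℝ V] [DiscreteTopology T] [IsZLattice ℝ T] (hVT : V ≤ T) :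
    ∃ _ : DiscreteTopology (parityLattice V T ι), IsZLattice ℝ (parityLattice V T ι) ∧
      covolume (parityLattice V T ι) = covolume V * covolume T ^ (Fintype.card ι - 1) := by
  obtain ⟨i₀⟩ := ‹Nonempty ι›
  -- instance search does not see through `Function.update`
  have hL : ∀ i, ∃ _ : DiscreteTopology (Function.update (fun _ => T) i₀ V i),
      IsZLattice ℝ (Function.update (fun _ => T) i₀ V i) :=
    (Function.forall_update_iff _
      (p := fun _ (L : Submodule ℤ E) => ∃ _ : DiscreteTopology L, IsZLattice ℝ L)).mpr
        ⟨⟨inferInstance, inferInstance⟩, fun _ _ => ⟨inferInstance, inferInstance⟩⟩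
  choose _ _ using hL
  rw [parityLattice_eq_comap hVT i₀]
  refine ⟨inferInstance, inferInstance, ?_⟩
  rw [covolume_comap_eq_abs_det_mul, det_parityShear_symm, abs_one, one_mul, covolume_pi,
    Fintype.prod_eq_mul_prod_compl i₀, Finset.prod_congr rfl fun i hi =>
      (by simp_all : covolume (Function.update (fun _ => T) i₀ V i) = covolume T)]
  simp [Finset.card_compl]

end Parity

theorem mul_div_rpow_eq_rpow_mul_div {c d v : ℝ} {n k : ℕ} (hc : 0 < c) (hv : 0 < v)
    (hn : n ≠ 0) (hk : k ≠ 0) :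
    c * d / (c ^ ((n : ℝ) / 2) * v ^ k) ^ ((2 : ℝ) / (k * n)) =
      c ^ (((k : ℝ) - 1) / k) * (d / v ^ ((2 : ℝ) / n)) := by
  have hn' : (n : ℝ) ≠ 0 := Nat.cast_ne_zero.mpr hn
  have hk' : (k : ℝ) ≠ 0 := Nat.cast_ne_zero.mpr hk
  rw [Real.mul_rpow (by positivity) (by positivity), ← Real.rpow_natCast v k,
    ← Real.rpow_mul hc.le, ← Real.rpow_mul hv.le,
    show (n : ℝ) / 2 * (2 / (k * n)) = 1 / k by field_simp,
    show (k : ℝ) * (2 / (k * n)) = 2 / n by field_simp,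
    show ((k : ℝ) - 1) / k = 1 - 1 / k by field_simp, Real.rpow_sub hc, Real.rpow_one]
  have : 0 < v ^ ((2 : ℝ) / n) := by positivity
  have : 0 < c ^ (1 / (k : ℝ)) := by positivity
  field_simp

theorem stmt_17_general {n : ℕ} (hn : 0 < n) (k : ℕ) (hk : 2 ≤ k)
    (T : Submodule ℤ (EuclideanSpace ℝ (Fin n)))
    [DiscreteTopology T] [IsZLattice ℝ T]
    (R : EuclideanSpace ℝ (Fin n) →ₗ[ℝ] EuclideanSpace ℝ (Fin n))
    (hR : ∀ x y : EuclideanSpace ℝ (Fin n), (inner ℝ (R x) (R y) : ℝ) = 2 * (inner ℝ x y : ℝ))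
    (hRT : ∀ t ∈ T, R t ∈ T)
    (V : Submodule ℤ (EuclideanSpace ℝ (Fin n)))
    (hV : ∀ x : EuclideanSpace ℝ (Fin n), x ∈ V ↔ ∃ t ∈ T, R t = x)
    (dT : ℝ)
    (hdT : IsLeast {d : ℝ | ∃ x ∈ T, x ≠ (0 : EuclideanSpace ℝ (Fin n)) ∧ ‖x‖ ^ 2 = d} dT)
    (ΓP : Submodule ℤ (Fin k → EuclideanSpace ℝ (Fin n)))
    (hΓP : ∀ x : Fin k → EuclideanSpace ℝ (Fin n),
      x ∈ ΓP ↔ (∀ i, x i ∈ T) ∧ (∑ i, x i) ∈ V) :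
    IsLeast {d : ℝ | ∃ x ∈ V, x ≠ (0 : EuclideanSpace ℝ (Fin n)) ∧ ‖x‖ ^ 2 = d} (2 * dT) ∧
    (∃ _ : DiscreteTopology V, IsZLattice ℝ V ∧
      ZLattice.covolume V volume =
        (2 : ℝ) ^ ((n : ℝ) / 2) * ZLattice.covolume T volume) ∧
    IsLeast {d : ℝ | ∃ x : Fin k → EuclideanSpace ℝ (Fin n),
        x ∈ ΓP ∧ x ≠ 0 ∧ (∑ i, ‖x i‖ ^ 2) = d} (2 * dT) ∧
    (∃ _ : DiscreteTopology ΓP, IsZLattice ℝ ΓP ∧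
      ZLattice.covolume ΓP volume =
        (2 : ℝ) ^ ((n : ℝ) / 2) * ZLattice.covolume T volume ^ k ∧
      (2 * dT) / ZLattice.covolume ΓP volume ^ ((2 : ℝ) / ((k : ℝ) * (n : ℝ))) =
        (2 : ℝ) ^ (((k : ℝ) - 1) / (k : ℝ)) *
          (dT / ZLattice.covolume T volume ^ ((2 : ℝ) / (n : ℝ)))) := by
  let Re := (LinearEquiv.ofInjectiveEndo R
    (R.injective_of_inner_map_map two_ne_zero hR)).toContinuousLinearEquiv
  -- as a pullback of `T`, `V` inherits its lattice instances
  obtain rfl : V = ZLattice.comap ℝ T Re.symm.toLinearMap :=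
    Submodule.ext fun x => (hV x).trans (ZLattice.mem_comap_symm_iff T Re).symm
  set V := ZLattice.comap ℝ T Re.symm.toLinearMap
  obtain rfl : ΓP = parityLattice V T (Fin k) :=
    Submodule.ext fun x => (hΓP x).trans mem_parityLattice.symm
  have hVT : V ≤ T := fun x hx => by
    obtain ⟨t, ht, rfl⟩ := (hV x).mp hx
    exact hRT t ht
  have hVimg : (V : Set (EuclideanSpace ℝ (Fin n))) = R '' T := Set.ext hV
  have hVmin : IsLeast {d | ∃ x ∈ (V : Set (EuclideanSpace ℝ (Fin n))), x ≠ 0 ∧ ‖x‖ ^ 2 = d}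
      (2 * dT) :=
    hVimg ▸ hdT.sq_norm_image two_pos (R.norm_map_sq_of_inner_map_map hR)
  have hVcov : ZLattice.covolume V = 2 ^ ((n : ℝ) / 2) * ZLattice.covolume T := by
    rw [ZLattice.covolume_comap_symm_of_inner_map_map _ _ zero_le_two Re hR,
      finrank_euclideanSpace_fin]
  have : Nonempty (Fin k) := ⟨⟨0, by omega⟩⟩
  obtain ⟨_, _, hΓcov⟩ := ZLattice.covolume_parityLattice (ι := Fin k) hVT
  rw [hVcov, Fintype.card_fin, mul_assoc, ← pow_succ', Nat.sub_add_cancel (by omega)] at hΓcov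
  refine ⟨hVmin, ⟨inferInstance, inferInstance, hVcov⟩,
    isLeast_parityLattice hVT hdT.2 hVmin le_rfl, ⟨inferInstance, inferInstance, hΓcov, ?_⟩⟩
  rw [hΓcov]
  exact mul_div_rpow_eq_rpow_mul_div two_pos (ZLattice.covolume_pos T volume) hn.ne' (by omega)

/-- Parity lattices from a scaling-rotation `R` with `⟨Rx,Ry⟩ = 2⟨x,y⟩` and `R(T) ⊆ T`,
`V = R(T)`: then `d(V) = 2·d(T)`, `vol(V) = 2^(n/2)·vol(T)`, `d(Γ_P) = 2·d(T)`,
`vol(Γ_P) = 2^(n/2)·vol(T)^k`, and `γ(Γ_P) = 2^((k−1)/k)·γ(T)`. -/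
theorem stmt_17 {n : ℕ} (hn : 0 < n) (k : ℕ) (hk : 2 ≤ k)
    (T : Submodule ℤ (EuclideanSpace ℝ (Fin n)))
    [DiscreteTopology T] [IsZLattice ℝ T]
    (hTne : ∃ t ∈ T, t ≠ (0 : EuclideanSpace ℝ (Fin n)))
    (R : EuclideanSpace ℝ (Fin n) →ₗ[ℝ] EuclideanSpace ℝ (Fin n))
    (hR : ∀ x y : EuclideanSpace ℝ (Fin n), (inner ℝ (R x) (R y) : ℝ) = 2 * (inner ℝ x y : ℝ))
    (hRT : ∀ t ∈ T, R t ∈ T)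
    (V : Submodule ℤ (EuclideanSpace ℝ (Fin n)))
    (hV : ∀ x : EuclideanSpace ℝ (Fin n), x ∈ V ↔ ∃ t ∈ T, R t = x)
    (dT : ℝ)
    (hdT : IsLeast {d : ℝ | ∃ x ∈ T, x ≠ (0 : EuclideanSpace ℝ (Fin n)) ∧ ‖x‖ ^ 2 = d} dT)
    (ΓP : Submodule ℤ (Fin k → EuclideanSpace ℝ (Fin n)))
    (hΓP : ∀ x : Fin k → EuclideanSpace ℝ (Fin n),
      x ∈ ΓP ↔ (∀ i, x i ∈ T) ∧ (∑ i, x i) ∈ V) :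
    IsLeast {d : ℝ | ∃ x ∈ V, x ≠ (0 : EuclideanSpace ℝ (Fin n)) ∧ ‖x‖ ^ 2 = d} (2 * dT) ∧
    (∃ _ : DiscreteTopology V, IsZLattice ℝ V ∧
      ZLattice.covolume V volume =
        (2 : ℝ) ^ ((n : ℝ) / 2) * ZLattice.covolume T volume) ∧
    IsLeast {d : ℝ | ∃ x : Fin k → EuclideanSpace ℝ (Fin n),
        x ∈ ΓP ∧ x ≠ 0 ∧ (∑ i, ‖x i‖ ^ 2) = d} (2 * dT) ∧
    (∃ _ : DiscreteTopology ΓP, IsZLattice ℝ ΓP ∧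
      ZLattice.covolume ΓP volume =
        (2 : ℝ) ^ ((n : ℝ) / 2) * ZLattice.covolume T volume ^ k ∧
      (2 * dT) / ZLattice.covolume ΓP volume ^ ((2 : ℝ) / ((k : ℝ) * (n : ℝ))) =
        (2 : ℝ) ^ (((k : ℝ) - 1) / (k : ℝ)) *
          (dT / ZLattice.covolume T volume ^ ((2 : ℝ) / (n : ℝ)))) :=
  stmt_17_general hn k hk T R hR hRT V hV dT hdT ΓP hΓP
end

section
/- For even n ≥ 2 let R_n : ℝ^n → ℝ^n be the linear map acting on each consecutive pair of coordinates by (a, b) ↦ (a − b, a + b). Define the Barnes–Wall lattices recursively by BW₂ = ℤ² and BW_{2n} = {(u, v) ∈ BW_n × BW_n : u + v ∈ R_n(BW_n)} ⊆ ℝ^{2n}. Then for every m ≥ 1 and n = 2^m: (a) R_n(BW_n) ⊆ BW_n, so the recursion is a single parity-check construction; (b) the minimum distance satisfies d(BW_n) = n/2, i.e., d(BW_{2^m}) = 2^{m−1}; and (c) the fundamental coding gain satisfies γ(BW_n) = √(n/2). -/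
open MeasureTheory

noncomputable section

/-- The scaling-rotation `R_N` acting on each consecutive pair of coordinates by
`(a, b) ↦ (a − b, a + b)`. -/
def Rmap {N : ℕ} (x : EuclideanSpace ℝ (Fin N)) : EuclideanSpace ℝ (Fin N) :=
  WithLp.toLp 2 fun i =>
    if _h : (i : ℕ) % 2 = 0 then
      x i - (if h' : (i : ℕ) + 1 < N then x ⟨(i : ℕ) + 1, h'⟩ else 0)
    else
      x ⟨(i : ℕ) - 1, Nat.lt_of_le_of_lt (Nat.sub_le _ _) i.isLt⟩ + x i

/-- Embedding of the first half of the coordinates. -/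
def lowIdx {m : ℕ} (i : Fin (2 ^ m)) : Fin (2 ^ (m + 1)) :=
  ⟨(i : ℕ), lt_of_lt_of_le i.isLt (Nat.pow_le_pow_right (by norm_num) (Nat.le_succ m))⟩

/-- Embedding of the second half of the coordinates. -/
def highIdx {m : ℕ} (i : Fin (2 ^ m)) : Fin (2 ^ (m + 1)) :=
  ⟨2 ^ m + (i : ℕ), by
    have h := i.isLt
    have h2 : 2 ^ (m + 1) = 2 ^ m + 2 ^ m := by rw [pow_succ, mul_two]
    omega⟩

/-- The Barnes–Wall lattices, defined recursively as single parity-check lattices: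
`BW 1 = ℤ²` and `BW (m+1) = {(u, v) : u, v ∈ BW m, u + v ∈ R(BW m)}`. -/
def BW : (m : ℕ) → Set (EuclideanSpace ℝ (Fin (2 ^ m)))
  | 0 => Set.univ
  | 1 => {x | ∀ i, ∃ z : ℤ, x i = (z : ℝ)}
  | (m + 2) => {x | ∃ u ∈ BW (m + 1), ∃ v ∈ BW (m + 1),
      (∀ i : Fin (2 ^ (m + 1)), x (lowIdx i) = u i ∧ x (highIdx i) = v i) ∧
      u + v ∈ Rmap '' (BW (m + 1))}

/-!
Write `n = 2 ^ m` and identify `ℝ^(2n)` with `ℝ^n × ℝ^n` by cutting a vector into halves. Since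
`n` is even, `R_(2n)` acts on each half as `R_n`, and `‖R x‖² = 2‖x‖²`. If `BW_n = Φ(ℤⁿ)` for a
linear map `Φ` and `R(BW_n) ⊆ BW_n`, then `BW_(2n)` is the image of `ℤ^(2n)` under the block
lower-triangular map `(a, b) ↦ (Φ a, R Φ b - Φ a)`, so `det Φ_(2n) = det R_n · (det Φ_n)²` with
`det R_n = 2^(n/2)`; this gives `vol(BW_n)² = (n/2)^(n/2)`. A nonzero `(u, v) ∈ BW_(2n)` either has
both halves nonzero, or has one half zero and the other equal to `R w` with `w ∈ BW_n` nonzero;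
either way `‖(u, v)‖² ≥ 2 d(BW_n)`, with equality at `(x, -x)` for a minimal `x`.
-/

local notation "𝔼" m:max => EuclideanSpace ℝ (Fin (2 ^ m))

def splitIdx (m : ℕ) : Fin (2 ^ m) ⊕ Fin (2 ^ m) ≃ Fin (2 ^ (m + 1)) :=
  finSumFinEquiv.trans (finCongr (Nat.two_pow_succ m).symm)

@[simp] lemma splitIdx_inl {m : ℕ} (i : Fin (2 ^ m)) : splitIdx m (.inl i) = lowIdx i := rfl

@[simp] lemma splitIdx_inr {m : ℕ} (i : Fin (2 ^ m)) : splitIdx m (.inr i) = highIdx i := by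
  ext; simp [splitIdx, highIdx, add_comm]

@[simp] lemma splitIdx_symm_lowIdx {m : ℕ} (i : Fin (2 ^ m)) :
    (splitIdx m).symm (lowIdx i) = .inl i := by
  rw [Equiv.symm_apply_eq, splitIdx_inl]

@[simp] lemma splitIdx_symm_highIdx {m : ℕ} (i : Fin (2 ^ m)) :
    (splitIdx m).symm (highIdx i) = .inr i := by
  rw [Equiv.symm_apply_eq, splitIdx_inr]

def halves (m : ℕ) : 𝔼 (m + 1) ≃ₗ[ℝ] 𝔼 m × 𝔼 m where
  toFun x := (WithLp.toLp 2 fun i => x (lowIdx i), WithLp.toLp 2 fun i => x (highIdx i))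
  invFun p := WithLp.toLp 2 fun j => Sum.elim p.1 p.2 ((splitIdx m).symm j)
  map_add' _ _ := rfl
  map_smul' _ _ := rfl
  left_inv x := by
    ext j
    obtain ⟨s, rfl⟩ := (splitIdx m).surjective j
    cases s <;> simp
  right_inv p := by
    ext i <;> simp

@[simp] lemma halves_fst_apply {m : ℕ} (x : 𝔼 (m + 1)) (i : Fin (2 ^ m)) :
    (halves m x).1 i = x (lowIdx i) := rfl

@[simp] lemma halves_snd_apply {m : ℕ} (x : 𝔼 (m + 1)) (i : Fin (2 ^ m)) :
    (halves m x).2 i = x (highIdx i) := rfl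

lemma norm_sq_eq_halves {m : ℕ} (x : 𝔼 (m + 1)) :
    ‖x‖ ^ 2 = ‖(halves m x).1‖ ^ 2 + ‖(halves m x).2‖ ^ 2 := by
  simp only [EuclideanSpace.norm_sq_eq, ← (splitIdx m).sum_comp, Fintype.sum_sum_type]
  simp

def Rmapₗ (N : ℕ) : EuclideanSpace ℝ (Fin N) →ₗ[ℝ] EuclideanSpace ℝ (Fin N) where
  toFun := Rmap
  map_add' x y := by
    ext i; simp only [Rmap, PiLp.add_apply, PiLp.toLp_apply]; split_ifs <;> ring
  map_smul' c x := by
    ext i; simp only [Rmap, PiLp.smul_apply, PiLp.toLp_apply, smul_eq_mul, RingHom.id_apply]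
    split_ifs <;> ring

@[simp] lemma Rmapₗ_apply {N : ℕ} (x : EuclideanSpace ℝ (Fin N)) : Rmapₗ N x = Rmap x := rfl

lemma Rmap_apply_of_even {N : ℕ} (x : EuclideanSpace ℝ (Fin N)) (i : Fin N)
    (hi : (i : ℕ) % 2 = 0) (hi' : (i : ℕ) + 1 < N) : Rmap x i = x i - x ⟨i + 1, hi'⟩ := by
  simp [Rmap, hi, hi']

lemma Rmap_apply_of_odd {N : ℕ} (x : EuclideanSpace ℝ (Fin N)) (i : Fin N)
    (hi : (i : ℕ) % 2 = 1) : Rmap x i = x ⟨i - 1, by omega⟩ + x i := by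
  simp [Rmap, hi]

-- `1 ≤ m` makes `2 ^ m` even, so that no coordinate pair straddles the two halves.
lemma Rmap_halves {m : ℕ} (hm : 1 ≤ m) (x : 𝔼 (m + 1)) :
    halves m (Rmap x) = (Rmap (halves m x).1, Rmap (halves m x).2) := by
  have heven : 2 ^ m % 2 = 0 := Nat.two_pow_mod_two_eq_zero.mpr hm
  have := Nat.two_pow_succ m
  ext i <;> simp only [halves_fst_apply, halves_snd_apply] <;>
    rcases Nat.mod_two_eq_zero_or_one i with hi | hi
  all_goals first
    | rw [Rmap_apply_of_even _ _ (by simp [lowIdx, highIdx]; omega)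
          (by simp [lowIdx, highIdx]; omega), Rmap_apply_of_even _ _ hi (by omega)]
    | rw [Rmap_apply_of_odd _ _ (by simp [lowIdx, highIdx]; omega), Rmap_apply_of_odd _ _ hi]
  all_goals
    simp only [halves_fst_apply, halves_snd_apply]
    congr 1 <;> exact congrArg x.ofLp (Fin.ext (by simp [highIdx]; omega))

lemma norm_sq_Rmap_two (x : EuclideanSpace ℝ (Fin 2)) : ‖Rmap x‖ ^ 2 = 2 * ‖x‖ ^ 2 := by
  simp [EuclideanSpace.norm_sq_eq, Fin.sum_univ_two, Rmap]
  ring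

lemma norm_sq_Rmap {m : ℕ} (hm : 1 ≤ m) (x : 𝔼 m) : ‖Rmap x‖ ^ 2 = 2 * ‖x‖ ^ 2 := by
  induction m, hm using Nat.le_induction with
  | base => exact norm_sq_Rmap_two x
  | succ m hm ih => rw [norm_sq_eq_halves, Rmap_halves hm, norm_sq_eq_halves x, ih, ih]; ring

lemma det_Rmapₗ_two : LinearMap.det (Rmapₗ 2) = 2 := by
  rw [← LinearMap.det_toMatrix (EuclideanSpace.basisFun (Fin 2) ℝ).toBasis, Matrix.det_fin_two]
  simp [LinearMap.toMatrix_apply, Rmap]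
  norm_num

lemma Rmapₗ_eq_conj_halves {m : ℕ} (hm : 1 ≤ m) :
    Rmapₗ (2 ^ (m + 1)) = (halves m).symm.toLinearMap ∘ₗ (Rmapₗ (2 ^ m)).prodMap (Rmapₗ (2 ^ m)) ∘ₗ
      (halves m).toLinearMap := by
  ext1 x
  apply (halves m).injective
  simp [Rmap_halves hm]

lemma det_conj_halves {m : ℕ} (f : 𝔼 m × 𝔼 m →ₗ[ℝ] 𝔼 m × 𝔼 m) :
    LinearMap.det ((halves m).symm.toLinearMap ∘ₗ f ∘ₗ (halves m).toLinearMap) =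
      LinearMap.det f := by
  simpa using LinearMap.det_conj f (halves m).symm

lemma det_Rmapₗ (m : ℕ) : LinearMap.det (Rmapₗ (2 ^ (m + 1))) = 2 ^ 2 ^ m := by
  induction m with
  | zero => simpa using det_Rmapₗ_two
  | succ m ih =>
    rw [Rmapₗ_eq_conj_halves (Nat.succ_pos m), det_conj_halves, LinearMap.det_prodMap, ih,
      ← pow_add, ← two_mul, pow_succ 2 m, mul_comm]

section ParityParam

variable {R M : Type*} [CommRing R] [AddCommGroup M] [Module R M]

def parityParam (f g : M →ₗ[R] M) : M × M →ₗ[R] M × M :=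
  (f ∘ₗ LinearMap.fst R M M).prod (g ∘ₗ LinearMap.snd R M M - f ∘ₗ LinearMap.fst R M M)

@[simp] lemma parityParam_apply (f g : M →ₗ[R] M) (p : M × M) :
    parityParam f g p = (f p.1, g p.2 - f p.1) := rfl

lemma det_parityParam [Module.Free R M] [Module.Finite R M] (f g : M →ₗ[R] M) :
    LinearMap.det (parityParam f g) = LinearMap.det f * LinearMap.det g := by
  classical
  let b := Module.Free.chooseBasis R M
  have hmat : LinearMap.toMatrix (b.prod b) (b.prod b) (parityParam f g) =
      Matrix.fromBlocks (LinearMap.toMatrix b b f) 0 (-LinearMap.toMatrix b b f)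
        (LinearMap.toMatrix b b g) := by
    ext (i | i) (j | j) <;> simp [LinearMap.toMatrix_apply]
  rw [← LinearMap.det_toMatrix (b.prod b), hmat, Matrix.det_fromBlocks_zero₁₂,
    LinearMap.det_toMatrix, LinearMap.det_toMatrix]

end ParityParam

def parityExtend {m : ℕ} (Φ : 𝔼 m →ₗ[ℝ] 𝔼 m) : 𝔼 (m + 1) →ₗ[ℝ] 𝔼 (m + 1) :=
  (halves m).symm.toLinearMap ∘ₗ parityParam Φ (Rmapₗ _ ∘ₗ Φ) ∘ₗ (halves m).toLinearMap

lemma halves_parityExtend {m : ℕ} (Φ : 𝔼 m →ₗ[ℝ] 𝔼 m) (y : 𝔼 (m + 1)) :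
    halves m (parityExtend Φ y) =
      (Φ (halves m y).1, Rmap (Φ (halves m y).2) - Φ (halves m y).1) := by
  simp [parityExtend]

lemma det_parityExtend {m : ℕ} (Φ : 𝔼 m →ₗ[ℝ] 𝔼 m) :
    LinearMap.det (parityExtend Φ) = LinearMap.det Φ ^ 2 * LinearMap.det (Rmapₗ (2 ^ m)) := by
  rw [parityExtend, det_conj_halves, det_parityParam, LinearMap.det_comp]
  ring

def bwGenerator : (k : ℕ) → 𝔼 (k + 1) →ₗ[ℝ] 𝔼 (k + 1)
  | 0 => LinearMap.id
  | k + 1 => parityExtend (bwGenerator k)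

lemma det_bwGenerator_sq (k : ℕ) : LinearMap.det (bwGenerator k) ^ 2 = 2 ^ (k * 2 ^ k) := by
  induction k with
  | zero => simp [bwGenerator]
  | succ k ih =>
    rw [bwGenerator, det_parityExtend, det_Rmapₗ, mul_pow, ih, ← pow_mul, ← pow_mul, ← pow_add]
    congr 1
    ring

def intLattice (N : ℕ) : Submodule ℤ (EuclideanSpace ℝ (Fin N)) :=
  Submodule.span ℤ (Set.range (EuclideanSpace.basisFun (Fin N) ℝ))

lemma mem_intLattice {N : ℕ} {x : EuclideanSpace ℝ (Fin N)} :
    x ∈ intLattice N ↔ ∀ i, ∃ z : ℤ, x i = z := by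
  rw [intLattice, ← OrthonormalBasis.coe_toBasis, Module.Basis.mem_span_iff_repr_mem]
  simp [eq_comm]

lemma mem_intLattice_succ {m : ℕ} {x : 𝔼 (m + 1)} :
    x ∈ intLattice (2 ^ (m + 1)) ↔
      (halves m x).1 ∈ intLattice (2 ^ m) ∧ (halves m x).2 ∈ intLattice (2 ^ m) := by
  simp only [mem_intLattice, ← (splitIdx m).forall_congr_right, Sum.forall]
  simp

lemma Rmap_mem_intLattice {N : ℕ} {x : EuclideanSpace ℝ (Fin N)} (hx : x ∈ intLattice N) :
    Rmap x ∈ intLattice N := by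
  rw [mem_intLattice] at hx ⊢
  choose z hz using hx
  intro i
  simp only [Rmap, PiLp.toLp_apply]
  split_ifs <;> simp only [hz] <;> norm_cast <;> exact ⟨_, rfl⟩

def nonzeroNormSq {E : Type*} [NormedAddCommGroup E] (S : Set E) : Set ℝ :=
  {d | ∃ x ∈ S, x ≠ 0 ∧ ‖x‖ ^ 2 = d}

lemma isLeast_nonzeroNormSq_intLattice {N : ℕ} (hN : 0 < N) :
    IsLeast (nonzeroNormSq (intLattice N : Set (EuclideanSpace ℝ (Fin N)))) 1 := by
  let e := EuclideanSpace.basisFun (Fin N) ℝ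
  have he : ‖e ⟨0, hN⟩‖ = 1 := e.orthonormal.1 _
  refine ⟨⟨e ⟨0, hN⟩, Submodule.subset_span ⟨_, rfl⟩, norm_ne_zero_iff.mp (by simp [he]),
    by simp [he]⟩, ?_⟩
  rintro _ ⟨x, hx, hx0, rfl⟩
  obtain ⟨i, hi⟩ : ∃ i, x i ≠ 0 := by
    by_contra! h
    exact hx0 (by ext i; exact h i)
  obtain ⟨z, hz⟩ := mem_intLattice.mp hx i
  have hz0 : z ≠ 0 := by rintro rfl; simp_all
  calc (1 : ℝ) ≤ (z : ℝ) ^ 2 := by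
        rw [one_le_sq_iff_one_le_abs, ← Int.cast_abs]; exact_mod_cast Int.one_le_abs hz0
    _ = x i ^ 2 := by rw [hz]
    _ ≤ ‖x‖ ^ 2 := by
        simp only [EuclideanSpace.norm_sq_eq, Real.norm_eq_abs, sq_abs]
        exact Finset.single_le_sum (fun j _ => sq_nonneg (x j)) (Finset.mem_univ i)

def parityCheck {m : ℕ} (S : Set (𝔼 m)) : Set (𝔼 (m + 1)) :=
  {x | (halves m x).1 ∈ S ∧ (halves m x).2 ∈ S ∧ (halves m x).1 + (halves m x).2 ∈ Rmap '' S}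

lemma BW_one : BW 1 = intLattice (2 ^ 1) := by
  ext x; simp [BW, mem_intLattice]

lemma BW_succ_succ (m : ℕ) : BW (m + 2) = parityCheck (BW (m + 1)) := by
  ext x
  constructor
  · rintro ⟨u, hu, v, hv, hx, huv⟩
    obtain rfl : (halves (m + 1) x).1 = u := by ext i; exact (hx i).1
    obtain rfl : (halves (m + 1) x).2 = v := by ext i; exact (hx i).2
    exact ⟨hu, hv, huv⟩
  · rintro ⟨hu, hv, huv⟩
    exact ⟨_, hu, _, hv, fun i => ⟨rfl, rfl⟩, huv⟩

lemma mapsTo_Rmap_parityCheck {m : ℕ} (hm : 1 ≤ m) {S : Set (𝔼 m)} (hS : Set.MapsTo Rmap S S) :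
    Set.MapsTo Rmap (parityCheck S) (parityCheck S) := by
  rintro x ⟨hu, hv, w, hw, hsum⟩
  refine ⟨?_, ?_, Rmap w, hS hw, ?_⟩ <;> rw [Rmap_halves hm]
  exacts [hS hu, hS hv, by rw [hsum]; exact map_add (Rmapₗ _) _ _]

lemma parityCheck_image_intLattice {m : ℕ} {Φ : 𝔼 m →ₗ[ℝ] 𝔼 m}
    (hΦ : Set.MapsTo Rmap (Φ '' intLattice (2 ^ m)) (Φ '' intLattice (2 ^ m))) :
    parityCheck (Φ '' intLattice (2 ^ m)) = parityExtend Φ '' intLattice (2 ^ (m + 1)) := by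
  ext x
  constructor
  · rintro ⟨⟨a, ha, hau⟩, -, _, ⟨b, hb, rfl⟩, hsum⟩
    refine ⟨(halves m).symm (a, b), mem_intLattice_succ.mpr (by simpa using ⟨ha, hb⟩), ?_⟩
    apply (halves m).injective
    rw [halves_parityExtend, LinearEquiv.apply_symm_apply, hau, hsum]
    simp
  · rintro ⟨y, hy, rfl⟩
    obtain ⟨ha, hb⟩ := mem_intLattice_succ.mp hy
    obtain ⟨c, hc, hcb⟩ := hΦ ⟨_, hb, rfl⟩
    refine ⟨?_, ?_, _, ⟨_, hb, rfl⟩, ?_⟩ <;> simp only [halves_parityExtend]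
    exacts [⟨_, ha, rfl⟩, ⟨_, sub_mem hc ha, by rw [map_sub, hcb]⟩, by abel]

lemma isLeast_nonzeroNormSq_parityCheck {m : ℕ} (hm : 1 ≤ m) (L : AddSubgroup (𝔼 m)) {d : ℝ}
    (hd : IsLeast (nonzeroNormSq (L : Set (𝔼 m))) d) :
    IsLeast (nonzeroNormSq (parityCheck (L : Set (𝔼 m)))) (2 * d) := by
  have hle : ∀ y ∈ L, y ≠ 0 → d ≤ ‖y‖ ^ 2 := fun y hy hy0 => hd.2 ⟨y, hy, hy0, rfl⟩
  have hle_Rmap : ∀ w ∈ L, Rmap w ≠ 0 → 2 * d ≤ ‖Rmap w‖ ^ 2 := fun w hw hw0 => by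
    rw [norm_sq_Rmap hm]
    exact mul_le_mul_of_nonneg_left (hle w hw fun h => hw0 (by simp [← Rmapₗ_apply, h]))
      zero_le_two
  constructor
  · obtain ⟨x, hx, hx0, hxd⟩ := hd.1
    refine ⟨(halves m).symm (x, -x), ?_, by simpa using hx0, ?_⟩
    · refine ⟨by simpa using hx, by simpa using L.neg_mem hx, 0, L.zero_mem, ?_⟩
      simpa using map_zero (Rmapₗ (2 ^ m))
    · rw [norm_sq_eq_halves, LinearEquiv.apply_symm_apply, norm_neg, hxd]
      ring
  · rintro _ ⟨x, ⟨hu, hv, w, hw, hsum⟩, hx0, rfl⟩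
    rw [norm_sq_eq_halves]
    by_cases hu0 : (halves m x).1 = 0
    · have hv0 : (halves m x).2 ≠ 0 := fun hv0 =>
        hx0 ((halves m).map_eq_zero_iff.mp (Prod.ext hu0 hv0))
      rw [hu0, zero_add] at hsum
      rw [hu0, ← hsum, norm_zero]
      linarith [hle_Rmap w hw (hsum ▸ hv0)]
    by_cases hv0 : (halves m x).2 = 0
    · rw [hv0, add_zero] at hsum
      rw [hv0, ← hsum, norm_zero]
      linarith [hle_Rmap w hw (hsum ▸ hu0)]
    linarith [hle _ hu hu0, hle _ hv hv0]

lemma mapsTo_Rmap_BW (k : ℕ) : Set.MapsTo Rmap (BW (k + 1)) (BW (k + 1)) := by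
  induction k with
  | zero => rw [BW_one]; exact fun x => Rmap_mem_intLattice
  | succ k ih => rw [BW_succ_succ]; exact mapsTo_Rmap_parityCheck (Nat.succ_pos k) ih

lemma BW_eq_image_bwGenerator (k : ℕ) :
    BW (k + 1) = bwGenerator k '' intLattice (2 ^ (k + 1)) := by
  induction k with
  | zero => simp [BW_one, bwGenerator]
  | succ k ih =>
    have hR := mapsTo_Rmap_BW k
    rw [ih] at hR
    rw [BW_succ_succ, ih, parityCheck_image_intLattice hR, bwGenerator]

lemma isLeast_nonzeroNormSq_BW (k : ℕ) : IsLeast (nonzeroNormSq (BW (k + 1))) (2 ^ k) := by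
  induction k with
  | zero => rw [BW_one]; exact isLeast_nonzeroNormSq_intLattice (by norm_num)
  | succ k ih =>
    obtain ⟨L, hL⟩ : ∃ L : AddSubgroup (𝔼 (k + 1)), (L : Set (𝔼 (k + 1))) = BW (k + 1) :=
      ⟨((intLattice _).map ((bwGenerator k).restrictScalars ℤ)).toAddSubgroup,
        by simp [BW_eq_image_bwGenerator]⟩
    rw [← hL] at ih
    have := isLeast_nonzeroNormSq_parityCheck (Nat.succ_pos k) L ih
    rwa [← pow_succ', hL, ← BW_succ_succ] at this

lemma exists_isZLattice_image_covolume_eq {ι E : Type*} [Fintype ι] [DecidableEq ι]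
    [NormedAddCommGroup E] [InnerProductSpace ℝ E] [FiniteDimensional ℝ E] [MeasurableSpace E]
    [BorelSpace E] (e : OrthonormalBasis ι ℝ E) (f : E →ₗ[ℝ] E) (hf : LinearMap.det f ≠ 0) :
    ∃ G : Submodule ℤ E, (G : Set E) = f '' Submodule.span ℤ (Set.range e) ∧
      ∃ _ : DiscreteTopology G, IsZLattice ℝ G ∧
        ZLattice.covolume G volume = |LinearMap.det f| := by
  have hdet : e.toBasis.det (f ∘ e.toBasis) = LinearMap.det f := by
    rw [Module.Basis.det_comp, Module.Basis.det_self, mul_one]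
  have hb := (e.toBasis.is_basis_iff_det).mpr (hdet ▸ hf.isUnit)
  let b := Module.Basis.mk hb.1 hb.2.ge
  refine ⟨Submodule.span ℤ (Set.range b), ?_, inferInstance, inferInstance, ?_⟩
  · rw [Module.Basis.coe_mk, Set.range_comp, OrthonormalBasis.coe_toBasis,
      ← LinearMap.coe_restrictScalars ℤ f, ← Submodule.map_span, Submodule.map_coe]
  · rw [ZLattice.covolume_eq_measure_fundamentalDomain _ volume
        (ZSpan.isAddFundamentalDomain b volume),
      ZSpan.measureReal_fundamentalDomain b volume e.toBasis,
      measureReal_congr (ZSpan.fundamentalDomain_ae_parallelepiped e.toBasis volume),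
      OrthonormalBasis.coe_toBasis, measureReal_def, e.volume_parallelepiped,
      Module.Basis.coe_mk, hdet]
    simp

lemma rpow_two_div_two_pow_eq_sqrt {c : ℝ} (hc : 0 ≤ c) {k : ℕ} (h : c ^ 2 = 2 ^ (k * 2 ^ k)) :
    c ^ ((2 : ℝ) / 2 ^ (k + 1)) = √(2 ^ k) := by
  rw [Real.sqrt_eq_rpow, ← Real.rpow_natCast 2 k, ← Real.rpow_mul zero_le_two,
    div_eq_mul_one_div, Real.rpow_mul hc, Real.rpow_two, h, ← Real.rpow_natCast,
    ← Real.rpow_mul zero_le_two]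
  congr 1
  push_cast
  field_simp
  ring

/-- Barnes–Wall lattices (in dimension `n = 2^m`, `m ≥ 1`): (a) `R(BW_n) ⊆ BW_n`;
(b) the minimum distance is `d(BW_n) = n/2`; (c) `BW_n` is a full-rank lattice with
fundamental coding gain `γ(BW_n) = d(BW_n)/vol(BW_n)^(2/n) = √(n/2)`. -/
theorem stmt_18 (m : ℕ) (hm : 1 ≤ m) :
    (∀ x ∈ BW m, Rmap x ∈ BW m) ∧
    IsLeast {d : ℝ | ∃ x ∈ BW m, x ≠ (0 : EuclideanSpace ℝ (Fin (2 ^ m))) ∧ ‖x‖ ^ 2 = d}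
      (((2 ^ m : ℕ) : ℝ) / 2) ∧
    (∃ G : Submodule ℤ (EuclideanSpace ℝ (Fin (2 ^ m))),
      (G : Set (EuclideanSpace ℝ (Fin (2 ^ m)))) = BW m ∧
      ∃ _ : DiscreteTopology G, IsZLattice ℝ G ∧
        (((2 ^ m : ℕ) : ℝ) / 2) /
            ZLattice.covolume G volume ^ ((2 : ℝ) / ((2 ^ m : ℕ) : ℝ)) =
          Real.sqrt (((2 ^ m : ℕ) : ℝ) / 2)) := by
  obtain ⟨k, rfl⟩ : ∃ k, m = k + 1 := ⟨m - 1, by omega⟩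
  have hn : ((2 ^ (k + 1) : ℕ) : ℝ) / 2 = 2 ^ k := by push_cast; ring
  have hdet := det_bwGenerator_sq k
  have hdet0 : LinearMap.det (bwGenerator k) ≠ 0 := by
    intro h; rw [h, zero_pow two_ne_zero] at hdet; exact (pow_pos two_pos _).ne hdet
  obtain ⟨G, hG, hdisc, hlat, hcov⟩ := exists_isZLattice_image_covolume_eq
    (EuclideanSpace.basisFun (Fin (2 ^ (k + 1))) ℝ) (bwGenerator k) hdet0
  refine ⟨fun x hx => mapsTo_Rmap_BW k hx, hn ▸ isLeast_nonzeroNormSq_BW k,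
    G, hG.trans (BW_eq_image_bwGenerator k).symm, hdisc, hlat, ?_⟩
  rw [hcov, hn, Nat.cast_pow, Nat.cast_ofNat,
    rpow_two_div_two_pow_eq_sqrt (abs_nonneg _) (by rw [sq_abs, hdet]), Real.div_sqrt]
end
end
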